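/- arXiv:2012.09080 — 9 statements merged into one kernel-verified Lean document; each statement's English description precedes it below -/
import Mathlib

section
/- For every a in the open interval (0, π/2), tan(a) > a + a³/3. -/
/-!
The function `tan x - x - x³/3` vanishes at `0`, and its derivative
`1 / cos² x - 1 - x² = tan² x - x²` is positive on `(0, π/2)` because `x < tan x` there.
Hence it is strictly increasing on `[0, π/2)`.
-/

open Real Set

theorem Real.hasDerivAt_tan_sub_id_sub_pow_three_div_three {x : ℝ} (hx : cos x ≠ 0) :
    HasDerivAt (fun y => tan y - y - y ^ 3 / 3) (tan x ^ 2 - x ^ 2) x := by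
  have hsec : 1 / cos x ^ 2 = 1 + tan x ^ 2 := by
    rw [one_div, ← inv_one_add_tan_sq hx, inv_inv]
  refine (((hasDerivAt_tan hx).sub (hasDerivAt_id x)).sub
    ((hasDerivAt_pow 3 x).div_const 3)).congr_deriv ?_
  rw [hsec]
  ring

theorem Real.strictMonoOn_tan_sub_id_sub_pow_three_div_three :
    StrictMonoOn (fun y => tan y - y - y ^ 3 / 3) (Ico 0 (π / 2)) := by
  have hcos : ∀ x ∈ Ico 0 (π / 2), cos x ≠ 0 := fun x hx =>
    (cos_pos_of_mem_Ioo ⟨by linarith [hx.1, pi_pos], hx.2⟩).ne'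
  refine strictMonoOn_of_hasDerivWithinAt_pos (convex_Ico 0 (π / 2))
    (fun x hx => (hasDerivAt_tan_sub_id_sub_pow_three_div_three (hcos x hx)).continuousAt
      |>.continuousWithinAt)
    (fun x hx => (hasDerivAt_tan_sub_id_sub_pow_three_div_three
      (hcos x (interior_subset hx))).hasDerivWithinAt) ?_
  intro x hx
  rw [interior_Ico] at hx
  exact sub_pos.2 (pow_lt_pow_left₀ (lt_tan hx.1 hx.2) hx.1.le two_ne_zero)

/-- For every `a` in the open interval `(0, π/2)`, `tan a > a + a³/3`. -/
theorem tan_gt_add_cube_third :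
    ∀ a ∈ Set.Ioo (0:ℝ) (π/2), Real.tan a > a + a^3/3 := by
  rintro a ⟨ha₀, ha⟩
  have hlt := strictMonoOn_tan_sub_id_sub_pow_three_div_three
    (left_mem_Ico.2 (by linarith)) ⟨ha₀.le, ha⟩ ha₀
  simp only [tan_zero] at hlt
  linarith
end

section
/- The function F(a) = sin²(a)·(1/3 + 1/a²) is strictly decreasing on the interval (0, π), and lim_{a→0⁺} F(a) = 1. -/
/-!
Differentiating, `F'(a) = (2 sin a / a³) · (cos a · (a + a³/3) - sin a)`, so it suffices that
`g(a) = sin a - cos a · (a + a³/3)` is positive on `(0, π)`. Since `g(0) = 0` and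
`g'(a) = a · (sin a - a cos a + a² sin a / 3)`, this follows from `sin a - a cos a > 0`, which in
turn holds because it vanishes at `0` and has derivative `a sin a > 0`.
For the limit, `F(a) = sin² a / 3 + sinc² a` away from `0`, and the right-hand side is continuous.
-/

open Real Set Filter Topology

theorem pos_of_hasDerivAt_pos_of_eq_zero {f f' : ℝ → ℝ} {a b x : ℝ}
    (hf : ∀ y ∈ Icc a b, HasDerivAt f (f' y) y) (ha : f a = 0)
    (hf' : ∀ y ∈ Ioo a b, 0 < f' y) (hx : x ∈ Ioc a b) : 0 < f x := by
  have hmono : StrictMonoOn f (Icc a b) := by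
    refine strictMonoOn_of_hasDerivWithinAt_pos (convex_Icc a b)
      (fun y hy => (hf y hy).continuousAt.continuousWithinAt) (fun y hy => ?_)
      (by simpa only [interior_Icc] using hf')
    rw [interior_Icc] at hy ⊢
    exact (hf y (Ioo_subset_Icc_self hy)).hasDerivWithinAt
  simpa only [ha] using hmono (left_mem_Icc.2 (hx.1.le.trans hx.2)) (Ioc_subset_Icc_self hx) hx.1

theorem mul_cos_lt_sin {x : ℝ} (hx₀ : 0 < x) (hxπ : x < π) : x * cos x < sin x := by
  have hderiv (y : ℝ) : HasDerivAt (fun y => sin y - y * cos y) (y * sin y) y := by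
    refine ((hasDerivAt_sin y).fun_sub
      ((hasDerivAt_id' y).fun_mul (hasDerivAt_cos y))).congr_deriv ?_
    ring
  have := pos_of_hasDerivAt_pos_of_eq_zero (fun y _ => hderiv y) (by simp)
    (fun y hy => mul_pos hy.1 (sin_pos_of_pos_of_lt_pi hy.1 hy.2)) ⟨hx₀, hxπ.le⟩
  linarith

theorem cos_mul_add_cube_div_three_lt_sin {x : ℝ} (hx₀ : 0 < x) (hxπ : x < π) :
    cos x * (x + x ^ 3 / 3) < sin x := by
  have hderiv (y : ℝ) : HasDerivAt (fun y => sin y - cos y * (y + y ^ 3 / 3))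
      (y * (sin y - y * cos y + y ^ 2 * sin y / 3)) y := by
    refine ((hasDerivAt_sin y).fun_sub ((hasDerivAt_cos y).fun_mul
      ((hasDerivAt_id' y).fun_add ((hasDerivAt_pow 3 y).div_const 3)))).congr_deriv ?_
    ring
  have hderiv_pos (y : ℝ) (hy : y ∈ Ioo 0 π) :
      0 < y * (sin y - y * cos y + y ^ 2 * sin y / 3) :=
    mul_pos hy.1 (add_pos (sub_pos.2 (mul_cos_lt_sin hy.1 hy.2))
      (div_pos (mul_pos (pow_pos hy.1 2) (sin_pos_of_pos_of_lt_pi hy.1 hy.2)) three_pos))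
  have := pos_of_hasDerivAt_pos_of_eq_zero (fun y _ => hderiv y) (by simp) hderiv_pos
    ⟨hx₀, hxπ.le⟩
  linarith

theorem hasDerivAt_sin_sq_mul_third_add_inv_sq {x : ℝ} (hx : x ≠ 0) :
    HasDerivAt (fun a : ℝ => sin a ^ 2 * (1 / 3 + 1 / a ^ 2))
      (2 * sin x / x ^ 3 * (cos x * (x + x ^ 3 / 3) - sin x)) x := by
  have hinv : HasDerivAt (fun a : ℝ => 1 / 3 + 1 / a ^ 2) (-(2 * x) / (x ^ 2) ^ 2) x := by
    simpa [one_div] using ((hasDerivAt_pow 2 x).inv (pow_ne_zero 2 hx)).const_add (1 / 3 : ℝ)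
  refine (((hasDerivAt_sin x).fun_pow 2).fun_mul hinv).congr_deriv ?_
  field_simp
  ring

theorem tendsto_sin_sq_mul_third_add_inv_sq_nhdsNE_zero :
    Tendsto (fun a : ℝ => sin a ^ 2 * (1 / 3 + 1 / a ^ 2)) (𝓝[≠] 0) (𝓝 1) := by
  have hcont : Continuous fun a => sin a ^ 2 / 3 + sinc a ^ 2 := by fun_prop
  have hlim : Tendsto (fun a => sin a ^ 2 / 3 + sinc a ^ 2) (𝓝[≠] 0) (𝓝 1) := by
    simpa using (hcont.tendsto 0).mono_left nhdsWithin_le_nhds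
  refine hlim.congr' ?_
  filter_upwards [self_mem_nhdsWithin] with a (ha : a ≠ 0)
  rw [sinc_of_ne_zero ha]
  field_simp

/-- `F(a) = sin²(a)·(1/3 + 1/a²)` is strictly decreasing on `(0, π)` and
tends to `1` as `a → 0⁺`. -/
theorem strictAntiOn_sin_sq_mul_third_add_inv_sq :
    StrictAntiOn (fun a : ℝ => (Real.sin a)^2 * (1/3 + 1/a^2)) (Set.Ioo 0 π) ∧
    Filter.Tendsto (fun a : ℝ => (Real.sin a)^2 * (1/3 + 1/a^2)) (𝓝[>] 0) (𝓝 1) := by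
  refine ⟨?_, tendsto_sin_sq_mul_third_add_inv_sq_nhdsNE_zero.mono_left
    (nhdsWithin_mono 0 fun a (ha : 0 < a) => ha.ne')⟩
  have hderiv (x : ℝ) (hx : x ∈ Ioo 0 π) := hasDerivAt_sin_sq_mul_third_add_inv_sq hx.1.ne'
  refine strictAntiOn_of_hasDerivWithinAt_neg (convex_Ioo 0 π)
    (fun x hx => (hderiv x hx).continuousAt.continuousWithinAt)
    (fun x hx => (hderiv x (by simpa using hx)).hasDerivWithinAt) (fun x hx => ?_)
  rw [interior_Ioo] at hx
  exact mul_neg_of_pos_of_neg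
    (div_pos (mul_pos two_pos (sin_pos_of_pos_of_lt_pi hx.1 hx.2)) (pow_pos hx.1 3))
    (sub_neg.2 (cos_mul_add_cube_div_three_lt_sin hx.1 hx.2))
end

section
/- If p is a trigonometric polynomial of degree n, p(x) = Σ_{j=1}^{n} (a_j cos(jx) + b_j sin(jx)), having 2n distinct roots x_1,…,x_{2n} in (−π, π], then there exists a constant c such that p(x) = c·∏_{j=1}^{2n} sin((x − x_j)/2) for all x. -/
open Real Set

open Complex in
private lemma exp_sub_exp_key (u v : ℂ) :
    Complex.exp (u*I) - Complex.exp (v*I)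
      = 2*I*Complex.exp (((u+v)/2)*I) * Complex.sin ((u-v)/2) := by
  have h1 : ((u+v)/2)*I + (-((u-v)/2) * I) = v*I := by ring
  have h2 : ((u+v)/2)*I + (((u-v)/2) * I) = u*I := by ring
  rw [Complex.sin, ← h1, ← h2, Complex.exp_add, Complex.exp_add]
  have hne : -((u-v)/2) * I = -((u-v)/2 * I) := by ring
  rw [hne]
  linear_combination (Complex.exp ((u+v)/2*I) *
    (Complex.exp ((u-v)/2*I) - Complex.exp (-((u-v)/2*I)))) * Complex.I_sq

open Complex in
private lemma term_id (A B t : ℝ) (j : ℕ) :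
    ((A:ℂ) - B*I)/2 * Complex.exp ((j:ℝ)*t*I) + ((A:ℂ) + B*I)/2 * Complex.exp (-((j:ℝ)*t)*I)
      = ((A * Real.cos (j*t) + B * Real.sin (j*t) : ℝ) : ℂ) := by
  rw [show ((j:ℝ)*t*I : ℂ) = ((j*t:ℝ):ℂ)*I by push_cast; ring,
      show (-((j:ℝ)*t)*I : ℂ) = ((-(j*t):ℝ):ℂ)*I by push_cast; ring,
      Complex.exp_mul_I, Complex.exp_mul_I]
  push_cast
  simp only [Complex.cos_neg, Complex.sin_neg]
  linear_combination (-(B * Complex.sin ((j:ℂ)*t)) : ℂ) * Complex.I_sq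

private lemma exp_I_inj_on_Ioc {s t : ℝ} (hs : s ∈ Set.Ioc (-π) π) (ht : t ∈ Set.Ioc (-π) π)
    (h : Complex.exp (s * Complex.I) = Complex.exp (t * Complex.I)) : s = t := by
  rw [Complex.exp_eq_exp_iff_exists_int] at h
  obtain ⟨k, hk⟩ := h
  have hk' : ((s:ℂ) - ((t:ℝ) + k * (2*π))) * Complex.I = 0 := by
    push_cast at hk ⊢
    linear_combination hk
  rcases mul_eq_zero.mp hk' with hk'' | hk''
  swap
  · exact absurd hk'' Complex.I_ne_zero
  rw [sub_eq_zero] at hk''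
  have heq : s = t + k * (2*π) := by exact_mod_cast hk''
  have hpi : (0:ℝ) < π := Real.pi_pos
  have hk0 : k = 0 := by
    rcases hs with ⟨hs1, hs2⟩; rcases ht with ⟨ht1, ht2⟩
    by_contra hk0
    have h1 : (1:ℝ) ≤ |(k:ℝ)| := by
      have h1' : (1:ℤ) ≤ |k| := by
        rcases lt_trichotomy k 0 with h'|h'|h'
        · rw [abs_of_neg h']; omega
        · exact absurd h' hk0
        · rw [abs_of_pos h']; omega
      calc (1:ℝ) = ((1:ℤ):ℝ) := by norm_num
        _ ≤ ((|k|:ℤ):ℝ) := by exact_mod_cast h1'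
        _ = |(k:ℝ)| := by push_cast; rfl
    have h2 : |s - t| < 2*π := by
      rw [abs_sub_lt_iff]; constructor <;> linarith
    have h3 : |s - t| = |(k:ℝ)| * (2*π) := by
      rw [heq, show t + k*(2*π) - t = (k:ℝ)*(2*π) by ring, abs_mul,
        abs_of_pos (by linarith : (0:ℝ) < 2*π)]
    nlinarith [abs_nonneg (s-t)]
  rw [heq, hk0]; push_cast; ring

open Polynomial in
private lemma poly_factor (m : ℕ) (P : ℂ[X]) (hdeg : P.natDegree ≤ m)
    (z : Fin m → ℂ) (hz : Function.Injective z) (hr : ∀ j, P.eval (z j) = 0) :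
    P = C (P.coeff m) * ∏ j, (X - C (z j)) := by
  classical
  set G : ℂ[X] := ∏ j, (X - C (z j)) with hG
  have hGmonic : G.Monic := monic_prod_of_monic _ _ (fun i _ => monic_X_sub_C _)
  have hGdeg : G.natDegree = m := by
    rw [hG, natDegree_prod_of_monic _ _ (fun i _ => monic_X_sub_C _)]
    simp [natDegree_X_sub_C]
  have hGcoeff : G.coeff m = 1 := by
    rw [← hGdeg]; exact hGmonic.coeff_natDegree
  have hGeval : ∀ j, G.eval (z j) = 0 := by
    intro j
    rw [hG, eval_prod]
    exact Finset.prod_eq_zero (Finset.mem_univ j) (by simp)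
  set Q : ℂ[X] := P - C (P.coeff m) * G with hQ
  have hQcoeff : Q.coeff m = 0 := by
    rw [hQ]; simp [coeff_C_mul, hGcoeff]
  have hQdeg : Q.natDegree ≤ m :=
    le_trans (natDegree_sub_le _ _)
      (max_le hdeg (le_trans (natDegree_C_mul_le _ _) hGdeg.le))
  have hQ0 : Q = 0 := by
    rcases eq_or_ne Q 0 with h | h
    · exact h
    apply Polynomial.eq_zero_of_natDegree_lt_card_of_eval_eq_zero Q hz
    · intro j; rw [hQ]; simp [hr j, hGeval j]
    · rw [Fintype.card_fin]
      refine lt_of_le_of_ne hQdeg (fun he => ?_)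
      have hlc := Polynomial.leadingCoeff_ne_zero.mpr h
      rw [Polynomial.leadingCoeff, he, hQcoeff] at hlc
      exact hlc rfl
  exact sub_eq_zero.mp hQ0

open Complex in
private lemma prod_factor (m : ℕ) (t : ℝ) (x : Fin m → ℝ) :
    ∏ j, (Complex.exp ((t:ℂ)*I) - Complex.exp ((x j:ℂ) * I))
      = (2*I)^m * (Complex.exp ((m:ℂ)*(t/2)*I)
        * Complex.exp (((∑ j, x j : ℝ):ℂ)/2*I))
        * ∏ j, ((Real.sin ((t - x j)/2) : ℝ) : ℂ) := by
  have h1 : ∀ j, Complex.exp ((t:ℂ)*I) - Complex.exp ((x j:ℂ)*I)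
      = (2*I*Complex.exp ((((t + x j)/2 : ℝ):ℂ)*I)) * ((Real.sin ((t - x j)/2) : ℝ):ℂ) := by
    intro j
    have harg : (((t + x j)/2 : ℝ):ℂ) = ((t:ℂ) + (x j:ℂ))/2 := by push_cast; ring
    have harg2 : (((t - x j)/2 : ℝ):ℂ) = ((t:ℂ) - (x j:ℂ))/2 := by push_cast; ring
    rw [exp_sub_exp_key (t:ℂ) (x j:ℂ), Complex.ofReal_sin, harg, harg2]
  rw [Finset.prod_congr rfl (fun j _ => h1 j), Finset.prod_mul_distrib,
    Finset.prod_mul_distrib, Finset.prod_const, Finset.card_univ, Fintype.card_fin,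
    ← Complex.exp_sum]
  congr 2
  rw [← Complex.exp_add]
  congr 1
  rw [← Finset.sum_mul]
  congr 1
  push_cast
  rw [← Finset.sum_div, Finset.sum_add_distrib, Finset.sum_const, Finset.card_univ,
    Fintype.card_fin]
  push_cast
  ring

/-- A trigonometric polynomial `p(x) = ∑_{j=1}^n (a_j cos jx + b_j sin jx)` with
`2n` distinct roots `x_1, …, x_{2n}` in `(−π, π]` can be written as
`p(x) = c · ∏_{j=1}^{2n} sin((x − x_j)/2)`. -/
theorem trig_poly_product_formula (n : ℕ) (hn : 0 < n) (a b : ℕ → ℝ)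
    (p : ℝ → ℝ)
    (hp : ∀ x : ℝ, p x = ∑ j ∈ Finset.Icc 1 n,
      (a j * Real.cos ((j : ℝ) * x) + b j * Real.sin ((j : ℝ) * x)))
    (x : Fin (2*n) → ℝ)
    (hinj : Function.Injective x)
    (hmem : ∀ j, x j ∈ Set.Ioc (-π) π)
    (hroot : ∀ j, p (x j) = 0) :
    ∃ c : ℝ, ∀ y : ℝ, p y = c * ∏ j, Real.sin ((y - x j)/2) := by
  classical
  set P : Polynomial ℂ := ∑ j ∈ Finset.Icc 1 n,
      (Polynomial.C (((a j : ℂ) - b j * Complex.I)/2) * Polynomial.X^(n+j)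
        + Polynomial.C (((a j : ℂ) + b j * Complex.I)/2) * Polynomial.X^(n-j)) with hPdef
  have hPdeg : P.natDegree ≤ 2*n := by
    apply Polynomial.natDegree_sum_le_of_forall_le
    intro j hj
    obtain ⟨hj1, hj2⟩ := Finset.mem_Icc.mp hj
    refine le_trans (Polynomial.natDegree_add_le _ _) (max_le ?_ ?_) <;>
      refine le_trans (Polynomial.natDegree_C_mul_le _ _) ?_ <;>
      simp [Polynomial.natDegree_X_pow] <;> omega
  have hPeval : ∀ t : ℝ, P.eval (Complex.exp (t * Complex.I))
      = Complex.exp ((n:ℝ) * t * Complex.I) * (p t : ℂ) := by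
    intro t
    rw [hp, hPdef]
    push_cast
    rw [Polynomial.eval_finset_sum, Finset.mul_sum]
    apply Finset.sum_congr rfl
    intro j hj
    obtain ⟨hj1, hj2⟩ := Finset.mem_Icc.mp hj
    simp only [Polynomial.eval_add, Polynomial.eval_mul, Polynomial.eval_C,
      Polynomial.eval_pow, Polynomial.eval_X]
    rw [← Complex.exp_nat_mul, ← Complex.exp_nat_mul]
    have e1 : ((n+j : ℕ) : ℂ) * ((t:ℂ) * Complex.I)
        = (n:ℝ)*(t:ℝ)*Complex.I + ((j:ℝ)*t)*Complex.I := by push_cast; ring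
    have e2 : ((n-j : ℕ) : ℂ) * ((t:ℂ) * Complex.I)
        = (n:ℝ)*(t:ℝ)*Complex.I + (-((j:ℝ)*t))*Complex.I := by
      rw [Nat.cast_sub hj2]; push_cast; ring
    rw [e1, e2, Complex.exp_add, Complex.exp_add]
    have hterm := term_id (a j) (b j) t j
    push_cast at hterm ⊢
    linear_combination Complex.exp ((n:ℂ)*(t:ℂ)*Complex.I) * hterm
  -- the roots on the unit circle
  set z : Fin (2*n) → ℂ := fun j => Complex.exp ((x j : ℝ) * Complex.I) with hz
  have hzinj : Function.Injective z := by
    intro i j hij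
    exact hinj (exp_I_inj_on_Ioc (hmem i) (hmem j) hij)
  have hzroot : ∀ j, P.eval (z j) = 0 := by
    intro j
    rw [hz, hPeval (x j), hroot j]
    simp
  have hfac := poly_factor (2*n) P hPdeg z hzinj hzroot
  set k : ℂ := P.coeff (2*n) with hk
  -- the final constant
  set c' : ℂ := k * (2*Complex.I)^(2*n) * Complex.exp (((∑ j, x j : ℝ):ℂ)/2*Complex.I) with hc'
  have hmain : ∀ t : ℝ, (p t : ℂ) = c' * ∏ j, ((Real.sin ((t - x j)/2) : ℝ) : ℂ) := by
    intro t
    have h1 := hPeval t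
    rw [hfac] at h1
    rw [Polynomial.eval_mul, Polynomial.eval_C, Polynomial.eval_prod] at h1
    simp only [Polynomial.eval_sub, Polynomial.eval_X, Polynomial.eval_C] at h1
    have h2 : ∏ j, (Complex.exp ((t:ℝ) * Complex.I) - z j)
        = (2*Complex.I)^(2*n) * (Complex.exp (((2*n:ℕ):ℂ)*(t/2)*Complex.I)
          * Complex.exp (((∑ j, x j : ℝ):ℂ)/2*Complex.I))
          * ∏ j, ((Real.sin ((t - x j)/2) : ℝ) : ℂ) := prod_factor (2*n) t x
    rw [h2] at h1
    have hexp : Complex.exp (((2*n:ℕ):ℂ)*(t/2)*Complex.I)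
        = Complex.exp ((n:ℝ)*t*Complex.I) := by
      congr 1; push_cast; ring
    rw [hexp] at h1
    have hne : Complex.exp ((n:ℝ)*t*Complex.I) ≠ 0 := Complex.exp_ne_zero _
    refine mul_left_cancel₀ hne ?_
    rw [← h1, hc']
    ring
  refine ⟨c'.re, fun y => ?_⟩
  have h := hmain y
  have hprod : ((∏ j, Real.sin ((y - x j)/2) : ℝ) : ℂ)
      = ∏ j, ((Real.sin ((y - x j)/2) : ℝ) : ℂ) := by push_cast; rfl
  rw [← hprod] at h
  have := congrArg Complex.re h
  simpa only [Complex.ofReal_re, Complex.ofReal_im, Complex.mul_re, mul_zero,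
    sub_zero] using this
end

section
/- Let u : ℝ/2πℤ → ℝ be Hölder continuous with exponent α ∈ (0,1], i.e., |u(x) − u(y)| ≤ M·|x − y|^α for all x, y. Then the periodic Hilbert transform Hu(x) = (1/2π) p.v. ∫_{−π}^{π} u(y) cot((x−y)/2) dy satisfies ‖Hu‖_∞ ≤ C(α)·‖u‖_∞·(1 + log₊(M/‖u‖_∞)) for some constant C(α) depending only on α, where log₊(t) = max(log t, 0). -/
/-!
Pairing `y = x - z` with `y = x + z` turns the truncated integral into
`∫_ε^π (u(x - z) - u(x + z)) cot(z/2) dz`, and `|cot(z/2)| ≤ π/z` on `(0, π]`. Below a scale `δ`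
the Hölder bound makes the integrand at most `2Mπ z^(α-1)`, contributing `2Mπ δ^α/α`; above `δ`
the sup bound makes it at most `2Aπ/z`, contributing `2Aπ log(π/δ)`. The choice
`δ = min(π, (A/M)^(1/α))` balances the two, so every truncation is bounded by
`A/α + A (log π + log₊(M/A)/α)`, and so is the limit `Hu x`.
-/

open Real Set Filter Topology MeasureTheory

theorem Ioo_diff_Ioo_eq_Ioc_union_Ico {x ε r : ℝ} (hε : 0 ≤ ε) :
    Ioo (x - r) (x + r) \ Ioo (x - ε) (x + ε) = Ioc (x - r) (x - ε) ∪ Ico (x + ε) (x + r) := by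
  ext y
  simp only [Set.mem_sdiff, mem_Ioo, mem_union, mem_Ioc, mem_Ico]
  constructor
  · rintro ⟨⟨h1, h2⟩, h3⟩
    by_cases h : y ≤ x - ε
    · exact Or.inl ⟨h1, h⟩
    · exact Or.inr ⟨by by_contra; exact h3 ⟨by linarith, by linarith⟩, h2⟩
  · rintro (⟨h1, h2⟩ | ⟨h1, h2⟩) <;>
      exact ⟨⟨by linarith, by linarith⟩, fun h => by linarith [h.1, h.2]⟩

theorem setIntegral_Ioo_diff_Ioo_eq {f : ℝ → ℝ} {x ε r : ℝ} (hε : 0 < ε) (hεr : ε ≤ r)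
    (hf_sub : IntervalIntegrable (fun z => f (x - z)) volume ε r)
    (hf_add : IntervalIntegrable (fun z => f (x + z)) volume ε r) :
    ∫ y in Ioo (x - r) (x + r) \ Ioo (x - ε) (x + ε), f y
      = ∫ z in ε..r, (f (x - z) + f (x + z)) := by
  have h_left : IntegrableOn f (Ioc (x - r) (x - ε)) := by
    simpa using (hf_sub.comp_sub_left x).symm.1
  have h_right : IntegrableOn f (Ico (x + ε) (x + r)) := by
    refine (intervalIntegrable_iff_integrableOn_Ico_of_le (by linarith)).mp ?_
    simpa [add_comm] using hf_add.comp_sub_right x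
  have h_disj : Disjoint (Ioc (x - r) (x - ε)) (Ico (x + ε) (x + r)) :=
    Set.disjoint_left.mpr fun y h1 h2 => by linarith [h1.2, h2.1]
  rw [Ioo_diff_Ioo_eq_Ioc_union_Ico hε.le,
    setIntegral_union h_disj measurableSet_Ico h_left h_right,
    integral_Ico_eq_integral_Ioo, ← integral_Ioc_eq_integral_Ioo,
    ← intervalIntegral.integral_of_le (by linarith),
    ← intervalIntegral.integral_of_le (by linarith),
    intervalIntegral.integral_add hf_sub hf_add, intervalIntegral.integral_comp_sub_left,
    intervalIntegral.integral_comp_add_left]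

theorem div_pi_le_sin_half {z : ℝ} (h0 : 0 ≤ z) (hπ : z ≤ π) : z / π ≤ sin (z / 2) := by
  have h := mul_le_sin (x := z / 2) (by linarith) (by linarith)
  rwa [show 2 / π * (z / 2) = z / π by ring] at h

theorem abs_cos_half_div_sin_half_le {z : ℝ} (h0 : 0 < z) (hπ : z ≤ π) :
    |cos (z / 2) / sin (z / 2)| ≤ π / z := by
  have hsin := div_pi_le_sin_half h0.le hπ
  calc |cos (z / 2) / sin (z / 2)| = |cos (z / 2)| / sin (z / 2) := by
        rw [abs_div, abs_of_pos (lt_of_lt_of_le (by positivity) hsin)]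
    _ ≤ 1 / (z / π) := div_le_div₀ zero_le_one (abs_cos_le_one _) (by positivity) hsin
    _ = π / z := one_div_div z π

theorem continuousOn_cos_half_div_sin_half :
    ContinuousOn (fun z => cos (z / 2) / sin (z / 2)) (Ioc 0 π) := by
  refine (continuous_cos.comp (continuous_id.div_const 2)).continuousOn.div
    (continuous_sin.comp (continuous_id.div_const 2)).continuousOn fun z hz => ?_
  exact (sin_pos_of_pos_of_lt_pi (by linarith [hz.1]) (by linarith [hz.2, pi_pos])).ne'

theorem norm_intervalIntegral_le_of_norm_le_mul_rpow {E : Type*} [NormedAddCommGroup E]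
    [NormedSpace ℝ E] {F : ℝ → E} {a b c α : ℝ} (ha : 0 < a) (hab : a ≤ b) (hc : 0 ≤ c) (hα : 0 < α)
    (hF : ∀ z ∈ Ioc a b, ‖F z‖ ≤ c * z ^ (α - 1)) :
    ‖∫ z in a..b, F z‖ ≤ c * b ^ α / α := by
  have hg : IntervalIntegrable (fun z => c * z ^ (α - 1)) volume a b :=
    (intervalIntegral.intervalIntegrable_rpow' (by linarith)).const_mul c
  calc ‖∫ z in a..b, F z‖ ≤ ∫ z in a..b, c * z ^ (α - 1) :=
        intervalIntegral.norm_integral_le_of_norm_le hab (.of_forall hF) hg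
    _ = c * (b ^ α - a ^ α) / α := by
        rw [intervalIntegral.integral_const_mul, integral_rpow (Or.inl (by linarith)),
          sub_add_cancel, mul_div_assoc]
    _ ≤ c * b ^ α / α := by
        gcongr
        linarith [rpow_nonneg ha.le α]

theorem norm_intervalIntegral_le_of_norm_le_div {E : Type*} [NormedAddCommGroup E]
    [NormedSpace ℝ E] {F : ℝ → E} {a b c : ℝ} (ha : 0 < a) (hab : a ≤ b)
    (hF : ∀ z ∈ Ioc a b, ‖F z‖ ≤ c / z) :
    ‖∫ z in a..b, F z‖ ≤ c * log (b / a) := by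
  have h0 : (0 : ℝ) ∉ uIcc a b := by
    rw [uIcc_of_le hab]; exact fun h => by linarith [h.1]
  have hg : IntervalIntegrable (fun z => c / z) volume a b :=
    (continuousOn_const.div continuousOn_id fun z hz => by
      rintro rfl; exact h0 hz).intervalIntegrable
  calc ‖∫ z in a..b, F z‖ ≤ ∫ z in a..b, c / z :=
        intervalIntegral.norm_integral_le_of_norm_le hab (.of_forall hF) hg
    _ = c * log (b / a) := by
        simp_rw [div_eq_mul_inv c]
        rw [intervalIntegral.integral_const_mul, integral_inv h0]

theorem abs_sub_le_two_mul_rpow_of_holder {u : ℝ → ℝ} {α M : ℝ} (hα1 : α ≤ 1)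
    (hM : 0 ≤ M) (hhol : ∀ x y, |u x - u y| ≤ M * |x - y| ^ α) (x : ℝ) {z : ℝ} (hz : 0 ≤ z) :
    |u (x - z) - u (x + z)| ≤ 2 * M * z ^ α := by
  have h2 : (2 : ℝ) ^ α ≤ 2 := rpow_le_self_of_one_le one_le_two hα1
  calc |u (x - z) - u (x + z)| ≤ M * |x - z - (x + z)| ^ α := hhol _ _
    _ = M * (2 ^ α * z ^ α) := by
        rw [show x - z - (x + z) = -(2 * z) by ring, abs_neg, abs_of_nonneg (by positivity),
          mul_rpow zero_le_two hz]
    _ ≤ 2 * M * z ^ α := by nlinarith [rpow_nonneg hz α, mul_le_mul_of_nonneg_left h2 hM]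

theorem abs_truncated_hilbert_le {u : ℝ → ℝ} {α M A : ℝ} (hα : 0 < α) (hα1 : α ≤ 1)
    (hM : 0 ≤ M) (hu : Continuous u) (hhol : ∀ x y, |u x - u y| ≤ M * |x - y| ^ α)
    (hA : ∀ t, |u t| ≤ A) (x : ℝ) {ε δ : ℝ} (hε : 0 < ε) (hεδ : ε ≤ δ) (hδ : δ ≤ π) :
    |(1 / (2 * π)) * ∫ y in Ioo (x - π) (x + π) \ Ioo (x - ε) (x + ε),
        u y * (cos ((x - y) / 2) / sin ((x - y) / 2))| ≤ M * δ ^ α / α + A * log (π / δ) := by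
  set k : ℝ → ℝ := fun z => cos (z / 2) / sin (z / 2) with hk
  set F : ℝ → ℝ := fun z => (u (x - z) - u (x + z)) * k z with hF
  have hδ0 : 0 < δ := hε.trans_le hεδ
  have hk_neg (z : ℝ) : k (-z) = -k z := by simp only [hk, neg_div, cos_neg, sin_neg, div_neg]
  have hεπ : ε ≤ π := hεδ.trans hδ
  have hk_cont : ContinuousOn k (Icc ε π) :=
    continuousOn_cos_half_div_sin_half.mono (Icc_subset_Ioc_iff hεπ |>.mpr ⟨hε, le_rfl⟩)
  have hint (v : ℝ → ℝ) (hv : Continuous v) :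
      IntervalIntegrable (fun z => v z * k z) volume ε π :=
    (hv.continuousOn.mul hk_cont).intervalIntegrable_of_Icc hεπ
  have hF_int : IntervalIntegrable F volume ε π :=
    hint (fun z => u (x - z) - u (x + z)) (by fun_prop)
  have hsymm : ∫ y in Ioo (x - π) (x + π) \ Ioo (x - ε) (x + ε), u y * k (x - y)
      = ∫ z in ε..π, F z := by
    rw [setIntegral_Ioo_diff_Ioo_eq hε hεπ]
    · refine intervalIntegral.integral_congr fun z _ => ?_
      simp only [hF, sub_sub_cancel, sub_add_cancel_left, hk_neg]
      ring
    · simpa only [sub_sub_cancel] using hint (fun z => u (x - z)) (by fun_prop)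
    · simp only [sub_add_cancel_left, hk_neg, mul_neg]
      exact (hint (fun z => u (x + z)) (by fun_prop)).neg
  have hnear : ‖∫ z in ε..δ, F z‖ ≤ 2 * M * π * δ ^ α / α := by
    refine norm_intervalIntegral_le_of_norm_le_mul_rpow (c := 2 * M * π) hε hεδ (by positivity) hα
      fun z hz => ?_
    have hz0 : 0 < z := hε.trans hz.1
    calc ‖F z‖ ≤ 2 * M * z ^ α * (π / z) := by
          rw [Real.norm_eq_abs, abs_mul]
          exact mul_le_mul (abs_sub_le_two_mul_rpow_of_holder hα1 hM hhol x hz0.le)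
            (abs_cos_half_div_sin_half_le hz0 (hz.2.trans hδ)) (abs_nonneg _) (by positivity)
      _ = 2 * M * π * z ^ (α - 1) := by rw [rpow_sub_one hz0.ne']; field_simp
  have hfar : ‖∫ z in δ..π, F z‖ ≤ 2 * A * π * log (π / δ) := by
    refine norm_intervalIntegral_le_of_norm_le_div (c := 2 * A * π) hδ0 hδ fun z hz => ?_
    have hz0 : 0 < z := hδ0.trans hz.1
    calc ‖F z‖ ≤ (A + A) * (π / z) := by
          rw [Real.norm_eq_abs, abs_mul]
          exact mul_le_mul ((abs_sub _ _).trans (add_le_add (hA _) (hA _)))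
            (abs_cos_half_div_sin_half_le hz0 hz.2) (abs_nonneg _)
            (by linarith [hA 0, abs_nonneg (u 0)])
      _ = 2 * A * π / z := by ring
  show |(1 / (2 * π)) * ∫ y in Ioo (x - π) (x + π) \ Ioo (x - ε) (x + ε), u y * k (x - y)|
    ≤ _
  calc _ = (1 / (2 * π)) * ‖(∫ z in ε..δ, F z) + ∫ z in δ..π, F z‖ := by
        rw [abs_mul, hsymm, intervalIntegral.integral_add_adjacent_intervals
          (hF_int.mono_set ?_) (hF_int.mono_set ?_), abs_of_pos (by positivity), Real.norm_eq_abs]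
        · rw [uIcc_of_le hεδ, uIcc_of_le hεπ]; exact Icc_subset_Icc_right hδ
        · rw [uIcc_of_le hδ, uIcc_of_le hεπ]; exact Icc_subset_Icc_left hεδ
    _ ≤ (1 / (2 * π)) * (2 * M * π * δ ^ α / α + 2 * A * π * log (π / δ)) := by
        gcongr
        exact (norm_add_le _ _).trans (add_le_add hnear hfar)
    _ = M * δ ^ α / α + A * log (π / δ) := by field_simp

theorem exists_mul_rpow_div_add_mul_log_le {α M A : ℝ} (hα : 0 < α) (hM : 0 < M) (hA : 0 < A) :
    ∃ δ, 0 < δ ∧ δ ≤ π ∧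
      M * δ ^ α / α + A * log (π / δ) ≤ (3 + 1 / α) * A * (1 + max (log (M / A)) 0) := by
  set L := max (log (M / A)) 0
  set δ := min π ((A / M) ^ α⁻¹)
  have hδ0 : 0 < δ := lt_min pi_pos (by positivity)
  have hMδ : M * δ ^ α ≤ A := by
    have h := rpow_le_rpow hδ0.le (min_le_right _ _) hα.le
    rw [rpow_inv_rpow (by positivity) hα.ne'] at h
    rwa [le_div_iff₀' hM] at h
  have hlog : log (π / δ) ≤ 3 + L / α := by
    have hL : 0 ≤ L / α := by positivity
    rcases min_cases π ((A / M) ^ α⁻¹) with ⟨hδ, -⟩ | ⟨hδ, -⟩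
    · rw [show δ = π from hδ, div_self pi_pos.ne', log_one]; linarith
    · have hlogπ : log π ≤ 3 := by linarith [log_le_sub_one_of_pos pi_pos, pi_le_four]
      have hML : log (M / A) / α ≤ L / α := by gcongr; exact le_max_left _ _
      rw [show δ = (A / M) ^ α⁻¹ from hδ,
        log_div pi_pos.ne' (rpow_pos_of_pos (div_pos hA hM) _).ne', log_rpow (by positivity),
        ← inv_div, log_inv]
      linarith [show α⁻¹ * -log (M / A) = -(log (M / A) / α) by ring]
  refine ⟨δ, hδ0, min_le_left _ _, ?_⟩
  have hAL : 0 ≤ A * L := by positivity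
  calc M * δ ^ α / α + A * log (π / δ) ≤ A / α + A * (3 + L / α) :=
        add_le_add (by gcongr) (mul_le_mul_of_nonneg_left hlog hA.le)
    _ ≤ (3 + 1 / α) * A * (1 + L) := by
        rw [show (3 + 1 / α) * A * (1 + L) = A / α + A * (3 + L / α) + 3 * (A * L) by ring]
        linarith

/-- Kato's inequality: for a `2π`-periodic Hölder continuous function `u` (with
exponent `α` and Hölder constant `M`), not identically zero, the periodic Hilbert
transform `Hu(x) = (1/2π) p.v. ∫_{x-π}^{x+π} u(y) cot((x−y)/2) dy` satisfies
`‖Hu‖_∞ ≤ C(α)·‖u‖_∞·(1 + log₊(M/‖u‖_∞))`. -/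
theorem kato_inequality (α : ℝ) (hα : α ∈ Set.Ioc (0:ℝ) 1) :
    ∃ C > (0:ℝ), ∀ (u Hu : ℝ → ℝ) (M A : ℝ),
      Continuous u → Function.Periodic u (2*π) →
      0 < M →
      (∀ x y : ℝ, |u x - u y| ≤ M * |x - y| ^ α) →
      A = ⨆ x : ℝ, |u x| → 0 < A →
      (∀ x : ℝ, Filter.Tendsto (fun ε : ℝ =>
          (1/(2*π)) * ∫ y in Set.Ioo (x - π) (x + π) \ Set.Ioo (x - ε) (x + ε),
            u y * (Real.cos ((x - y)/2) / Real.sin ((x - y)/2)))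
          (𝓝[>] 0) (𝓝 (Hu x))) →
      ∀ x : ℝ, |Hu x| ≤ C * A * (1 + max (Real.log (M / A)) 0) := by
  obtain ⟨hα0, hα1⟩ := hα
  refine ⟨3 + 1 / α, by positivity, fun u Hu M A hu hper hM hhol hAsup hA htend x => ?_⟩
  have hbdd : BddAbove (range fun t => |u t|) :=
    ((hper.comp abs).isBounded_of_continuous two_pi_pos.ne' hu.abs).bddAbove
  have hu_le (t : ℝ) : |u t| ≤ A := hAsup ▸ le_ciSup hbdd t
  obtain ⟨δ, hδ0, hδπ, hδ⟩ := exists_mul_rpow_div_add_mul_log_le hα0 hM hA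
  refine le_of_tendsto (htend x).abs (eventually_of_mem (Ioo_mem_nhdsGT hδ0) fun ε hε => ?_)
  exact (abs_truncated_hilbert_le hα0 hα1 hM.le hu hhol hu_le x hε.1 hε.2.le hδπ).trans hδ
end

section
/- Let f be a continuous 2π-periodic function with maximum value M attained at x₀, minimum value m, and mean value f̄ = (1/2π)∫_{−π}^{π} f(x) dx, with M > m. Then the fractional Laplacian Λf(x₀) = (1/4π) p.v. ∫_{−π}^{π} (f(x₀) − f(y)) / sin²((x₀−y)/2) dy satisfies Λf(x₀) > ((M−m)/π)·cot(π(f̄−m)/(2(M−m))). -/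
/-!
Put `A = M - m`, `g y = f x₀ - f y ∈ [0, A]` and `K y = sin⁻² ((x₀ - y) / 2)`, a weight
that decreases in `|x₀ - y|`. By periodicity `∫ g = 2 A (π - δ)` over a period, where
`δ = π (f̄ - m) / A`. With `c = sin⁻² (δ / 2)`, the value of `K` at distance `δ`, the pointwise
"bathtub" inequality `c g - A (c - K)⁺ ≤ g K` integrates to
`∫ g K ≥ c ∫ g - A ∫ (c - K)⁺ = 4 A cot (δ / 2)`, with equality only for the discontinuous
profile `g = A · 1{|x₀ - y| > δ}`. A continuous `g` leaves a positive gap near `|x₀ - y| = δ`;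
it does not depend on the truncation `ε`, so it survives the principal value limit.
-/

open Real Set Filter Topology MeasureTheory

namespace Real

theorem cot_neg (x : ℝ) : cot (-x) = -cot x := by
  simp [cot_eq_cos_div_sin, div_neg]

theorem cot_pi_div_two : cot (π / 2) = 0 := by
  simp [cot_eq_cos_div_sin]

theorem hasDerivAt_cot {x : ℝ} (hx : sin x ≠ 0) : HasDerivAt cot (-(sin x ^ 2)⁻¹) x := by
  rw [show cot = fun y => cos y / sin y from funext cot_eq_cos_div_sin]
  refine ((hasDerivAt_cos x).div (hasDerivAt_sin x) hx).congr_deriv ?_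
  rw [show -sin x * sin x - cos x * cos x = -1 by linear_combination -sin_sq_add_cos_sq x]
  ring

theorem sin_sq_half_eq (x : ℝ) : sin (x / 2) ^ 2 = 1 / 2 - cos x / 2 := by
  rw [sin_sq_eq_half_sub, mul_div_cancel₀ x two_ne_zero]

theorem sin_sq_half_le_sin_sq_half {s t : ℝ} (hst : |s| ≤ |t|) (ht : |t| ≤ π) :
    sin (s / 2) ^ 2 ≤ sin (t / 2) ^ 2 := by
  have : cos t ≤ cos s := by
    rw [← cos_abs s, ← cos_abs t]
    exact strictAntiOn_cos.antitoneOn ⟨abs_nonneg s, hst.trans ht⟩ ⟨abs_nonneg t, ht⟩ hst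
  rw [sin_sq_half_eq, sin_sq_half_eq]
  linarith

theorem sin_sq_half_lt_sin_sq_half {s t : ℝ} (hst : |s| < |t|) (ht : |t| ≤ π) :
    sin (s / 2) ^ 2 < sin (t / 2) ^ 2 := by
  have : cos t < cos s := by
    rw [← cos_abs s, ← cos_abs t]
    exact strictAntiOn_cos ⟨abs_nonneg s, hst.le.trans ht⟩ ⟨abs_nonneg t, ht⟩ hst
  rw [sin_sq_half_eq, sin_sq_half_eq]
  linarith

theorem sin_sq_half_pos {t : ℝ} (h0 : t ≠ 0) (ht : |t| ≤ π) : 0 < sin (t / 2) ^ 2 := by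
  simpa using sin_sq_half_lt_sin_sq_half (s := 0) (by simpa using h0) ht

theorem inv_sin_sq_half_le_inv_sin_sq_half {s t : ℝ} (hs : s ≠ 0) (hst : |s| ≤ |t|)
    (ht : |t| ≤ π) : (sin (t / 2) ^ 2)⁻¹ ≤ (sin (s / 2) ^ 2)⁻¹ :=
  inv_anti₀ (sin_sq_half_pos hs (hst.trans ht)) (sin_sq_half_le_sin_sq_half hst ht)

theorem inv_sin_sq_half_lt_inv_sin_sq_half {s t : ℝ} (hs : s ≠ 0) (hst : |s| < |t|)
    (ht : |t| ≤ π) : (sin (t / 2) ^ 2)⁻¹ < (sin (s / 2) ^ 2)⁻¹ :=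
  inv_strictAnti₀ (sin_sq_half_pos hs (hst.le.trans ht)) (sin_sq_half_lt_sin_sq_half hst ht)

end Real

theorem Continuous.apply_eq_of_forall_Ioo {α β : Type*} [TopologicalSpace α] [LinearOrder α]
    [OrderTopology α] [DenselyOrdered α] [TopologicalSpace β] [T1Space β] {g : α → β}
    (hg : Continuous g) {a b x : α} {v : β} (hab : a < b) (h : ∀ y ∈ Ioo a b, g y = v)
    (hx : x ∈ Icc a b) : g x = v :=
  closure_minimal h (isClosed_singleton.preimage hg) (by rwa [closure_Ioo hab.ne])

theorem Function.Periodic.setIntegral_Ioo_eq {f : ℝ → ℝ} {T : ℝ} (hper : f.Periodic T)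
    (hT : 0 ≤ T) (a b : ℝ) : ∫ y in Ioo a (a + T), f y = ∫ y in b..b + T, f y := by
  rw [← integral_Ioc_eq_integral_Ioo, ← intervalIntegral.integral_of_le (by linarith),
    hper.intervalIntegral_add_eq]

theorem Function.Periodic.mul_lt_intervalIntegral {f : ℝ → ℝ} {T m : ℝ} (hT : 0 < T)
    (hf : Continuous f) (hper : f.Periodic T) (hle : ∀ x, m ≤ f x) (hlt : ∃ x, m < f x)
    (a : ℝ) : T * m < ∫ x in a..a + T, f x := by
  obtain ⟨x₁, hx₁⟩ := hlt
  obtain ⟨y, hy, hfy⟩ := hper.exists_mem_Ico hT x₁ a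
  have := intervalIntegral.integral_lt_integral_of_continuousOn_of_le_of_exists_lt
    (f := fun _ => m) (by linarith) continuousOn_const hf.continuousOn (fun x _ => hle x)
    ⟨y, Ico_subset_Icc_self hy, hfy ▸ hx₁⟩
  simpa using this

theorem Function.Periodic.intervalIntegral_lt_mul {f : ℝ → ℝ} {T M : ℝ} (hT : 0 < T)
    (hf : Continuous f) (hper : f.Periodic T) (hle : ∀ x, f x ≤ M) (hlt : ∃ x, f x < M)
    (a : ℝ) : ∫ x in a..a + T, f x < T * M := by
  obtain ⟨x₁, hx₁⟩ := hlt
  obtain ⟨y, hy, hfy⟩ := hper.exists_mem_Ico hT x₁ a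
  have := intervalIntegral.integral_lt_integral_of_continuousOn_of_le_of_exists_lt
    (g := fun _ => M) (by linarith) hf.continuousOn continuousOn_const (fun x _ => hle x)
    ⟨y, Ico_subset_Icc_self hy, hfy ▸ hx₁⟩
  simpa using this

def bathtubGap (A c g k : ℝ) : ℝ := g * k - (c * g - A * max (c - k) 0)

section bathtubGap

variable {A c g k : ℝ}

theorem bathtubGap_nonneg (hg0 : 0 ≤ g) (hgA : g ≤ A) : 0 ≤ bathtubGap A c g k := by
  unfold bathtubGap
  rcases le_total c k with h | h
  · rw [max_eq_right (sub_nonpos.2 h)]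
    nlinarith
  · rw [max_eq_left (sub_nonneg.2 h)]
    nlinarith

theorem eq_zero_of_bathtubGap_eq_zero (hck : c < k) (h : bathtubGap A c g k = 0) : g = 0 := by
  rw [bathtubGap, max_eq_right (by linarith)] at h
  have : g * (k - c) = 0 := by linarith
  exact (mul_eq_zero.1 this).resolve_right (sub_ne_zero.2 hck.ne')

theorem eq_of_bathtubGap_eq_zero (hkc : k < c) (h : bathtubGap A c g k = 0) : g = A := by
  rw [bathtubGap, max_eq_left (by linarith)] at h
  have : (A - g) * (c - k) = 0 := by linarith
  linarith [(mul_eq_zero.1 this).resolve_right (sub_ne_zero.2 hkc.ne')]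

theorem le_setIntegral_mul_of_bathtub {α : Type*} [MeasurableSpace α] {μ : Measure α}
    {s t : Set α} {g k : α → ℝ} (hs : MeasurableSet s) (hts : t ⊆ s)
    (hg0 : ∀ x ∈ s, 0 ≤ g x) (hgA : ∀ x ∈ s, g x ≤ A) (hg : IntegrableOn g s μ)
    (hgk : IntegrableOn (fun x => g x * k x) s μ)
    (hφ : IntegrableOn (fun x => max (c - k x) 0) s μ) :
    c * ∫ x in s, g x ∂μ - A * ∫ x in s, max (c - k x) 0 ∂μ
        + ∫ x in t, bathtubGap A c (g x) (k x) ∂μ ≤ ∫ x in s, g x * k x ∂μ := by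
  have hlower : IntegrableOn (fun x => c * g x - A * max (c - k x) 0) s μ :=
    (hg.const_mul c).sub (hφ.const_mul A)
  have hsplit : ∫ x in s, bathtubGap A c (g x) (k x) ∂μ = ∫ x in s, g x * k x ∂μ
      - (c * ∫ x in s, g x ∂μ - A * ∫ x in s, max (c - k x) 0 ∂μ) := by
    simp only [bathtubGap]
    rw [integral_sub hgk hlower, integral_sub (hg.const_mul c) (hφ.const_mul A),
      integral_const_mul, integral_const_mul]
  have hmono : ∫ x in t, bathtubGap A c (g x) (k x) ∂μ ≤ ∫ x in s, bathtubGap A c (g x) (k x) ∂μ :=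
    setIntegral_mono_set (hgk.sub hlower)
      ((ae_restrict_iff' hs).2 (ae_of_all _ fun x hx => bathtubGap_nonneg (hg0 x hx) (hgA x hx)))
      hts.eventuallyLE
  linarith

end bathtubGap

def pvDomain (x₀ ε : ℝ) : Set ℝ := Ioo (x₀ - π) (x₀ + π) \ Ioo (x₀ - ε) (x₀ + ε)

section pvDomain

variable {x₀ ε δ : ℝ}

theorem mem_pvDomain {y : ℝ} : y ∈ pvDomain x₀ ε ↔ ε ≤ |x₀ - y| ∧ |x₀ - y| < π := by
  simp only [pvDomain, Set.mem_sdiff, mem_Ioo, abs_lt, le_abs']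
  grind

theorem measurableSet_pvDomain : MeasurableSet (pvDomain x₀ ε) :=
  measurableSet_Ioo.diff measurableSet_Ioo

theorem pvDomain_subset_pvDomain (h : ε ≤ δ) : pvDomain x₀ δ ⊆ pvDomain x₀ ε :=
  sdiff_subset_sdiff_right (Ioo_subset_Ioo (by linarith) (by linarith))

theorem measureReal_pvDomain (hε : 0 ≤ ε) (hεπ : ε ≤ π) :
    volume.real (pvDomain x₀ ε) = 2 * (π - ε) := by
  rw [pvDomain, measureReal_sdiff (Ioo_subset_Ioo (by linarith) (by linarith)) measurableSet_Ioo
    measure_Ioo_lt_top.ne,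
    volume_real_Ioo_of_le (by linarith), volume_real_Ioo_of_le (by linarith)]
  ring

theorem integrableOn_pvDomain {F : ℝ → ℝ}
    (hF : ContinuousOn F (Icc (x₀ - π) (x₀ + π) \ Ioo (x₀ - ε) (x₀ + ε))) :
    IntegrableOn F (pvDomain x₀ ε) :=
  (hF.integrableOn_compact (isCompact_Icc.diff isOpen_Ioo)).mono_set
    (sdiff_subset_sdiff_left Ioo_subset_Icc_self)

theorem setIntegral_pvDomain_eq_add (hε : 0 < ε) (hεπ : ε ≤ π) {F : ℝ → ℝ}
    (hF : IntegrableOn F (pvDomain x₀ ε)) :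
    ∫ y in pvDomain x₀ ε, F y =
      (∫ y in (x₀ - π)..(x₀ - ε), F y) + ∫ y in (x₀ + ε)..(x₀ + π), F y := by
  have hunion : pvDomain x₀ ε = Ioc (x₀ - π) (x₀ - ε) ∪ Ico (x₀ + ε) (x₀ + π) := by
    ext y
    simp only [pvDomain, Set.mem_sdiff, mem_Ioo, mem_union, mem_Ioc, mem_Ico, not_and_or, not_lt]
    grind
  rw [hunion] at hF ⊢
  rw [setIntegral_union (disjoint_left.2 fun y h1 h2 => by linarith [h1.2, h2.1]) measurableSet_Ico
    (hF.mono_set subset_union_left) (hF.mono_set subset_union_right),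
    integral_Ico_eq_integral_Ioo, ← integral_Ioc_eq_integral_Ioo,
    intervalIntegral.integral_of_le (by linarith), intervalIntegral.integral_of_le (by linarith)]

theorem sin_sq_half_sub_pos (hε : 0 < ε) {y : ℝ}
    (hy : y ∈ Icc (x₀ - π) (x₀ + π) \ Ioo (x₀ - ε) (x₀ + ε)) : 0 < sin ((x₀ - y) / 2) ^ 2 := by
  obtain ⟨⟨h1, h2⟩, h3⟩ := hy
  exact sin_sq_half_pos (fun h => h3 ⟨by linarith, by linarith⟩)
    (abs_le.2 ⟨by linarith, by linarith⟩)

theorem continuousOn_inv_sin_sq_half (hε : 0 < ε) :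
    ContinuousOn (fun y => (sin ((x₀ - y) / 2) ^ 2)⁻¹)
      (Icc (x₀ - π) (x₀ + π) \ Ioo (x₀ - ε) (x₀ + ε)) :=
  (Continuous.continuousOn (by fun_prop)).inv₀ fun _ hy => (sin_sq_half_sub_pos hε hy).ne'

theorem hasDerivAt_two_mul_cot_half_sub {y : ℝ} (hy : sin ((x₀ - y) / 2) ≠ 0) :
    HasDerivAt (fun z => 2 * cot ((x₀ - z) / 2)) (sin ((x₀ - y) / 2) ^ 2)⁻¹ y := by
  have hlin : HasDerivAt (fun z : ℝ => (x₀ - z) / 2) (-1 / 2) y := by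
    simpa using ((hasDerivAt_id y).const_sub x₀).div_const 2
  refine (((hasDerivAt_cot hy).comp y hlin).const_mul 2).congr_deriv ?_
  ring

theorem setIntegral_pvDomain_inv_sin_sq_half (hδ : 0 < δ) (hδπ : δ ≤ π) :
    ∫ y in pvDomain x₀ δ, (sin ((x₀ - y) / 2) ^ 2)⁻¹ = 4 * cot (δ / 2) := by
  have hK := continuousOn_inv_sin_sq_half (x₀ := x₀) hδ
  have hftc : ∀ a b, a ≤ b → Icc a b ⊆ Icc (x₀ - π) (x₀ + π) \ Ioo (x₀ - δ) (x₀ + δ) →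
      ∫ y in a..b, (sin ((x₀ - y) / 2) ^ 2)⁻¹ =
        2 * cot ((x₀ - b) / 2) - 2 * cot ((x₀ - a) / 2) := by
    intro a b hab hsub
    rw [← uIcc_of_le hab] at hsub
    refine intervalIntegral.integral_eq_sub_of_hasDerivAt (f := fun z => 2 * cot ((x₀ - z) / 2))
      (fun y hy => ?_) (hK.mono hsub).intervalIntegrable
    exact hasDerivAt_two_mul_cot_half_sub fun h =>
      (sin_sq_half_sub_pos hδ (hsub hy)).ne' (by simp [h])
  rw [setIntegral_pvDomain_eq_add hδ hδπ (integrableOn_pvDomain hK),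
    hftc _ _ (by linarith) fun y hy =>
      ⟨⟨hy.1, by linarith [hy.2]⟩, fun h => by linarith [h.1, hy.2]⟩,
    hftc _ _ (by linarith) fun y hy =>
      ⟨⟨by linarith [hy.1], hy.2⟩, fun h => by linarith [h.2, hy.1]⟩]
  rw [show (x₀ - (x₀ - δ)) / 2 = δ / 2 by ring, show (x₀ - (x₀ - π)) / 2 = π / 2 by ring,
    show (x₀ - (x₀ + δ)) / 2 = -(δ / 2) by ring, show (x₀ - (x₀ + π)) / 2 = -(π / 2) by ring,
    cot_neg, cot_neg, cot_pi_div_two]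
  ring

theorem setIntegral_pvDomain_max_sub_inv_sin_sq_half (hε : 0 < ε) (hεδ : ε ≤ δ) (hδπ : δ ≤ π) :
    ∫ y in pvDomain x₀ ε, max ((sin (δ / 2) ^ 2)⁻¹ - (sin ((x₀ - y) / 2) ^ 2)⁻¹) 0
      = 2 * (π - δ) * (sin (δ / 2) ^ 2)⁻¹ - 4 * cot (δ / 2) := by
  have hδ : 0 < δ := hε.trans_le hεδ
  have hδ' : |δ| ≤ π := by rwa [abs_of_pos hδ]
  rw [setIntegral_eq_of_subset_of_forall_sdiff_eq_zero measurableSet_pvDomain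
      (pvDomain_subset_pvDomain hεδ) ?inner,
    setIntegral_congr_fun measurableSet_pvDomain (g := fun y =>
      (sin (δ / 2) ^ 2)⁻¹ - (sin ((x₀ - y) / 2) ^ 2)⁻¹) ?outer,
    integral_sub (integrableOn_pvDomain continuousOn_const)
      (integrableOn_pvDomain (continuousOn_inv_sin_sq_half hδ)),
    setIntegral_const, measureReal_pvDomain hδ.le hδπ,
    setIntegral_pvDomain_inv_sin_sq_half hδ hδπ, smul_eq_mul]
  case inner =>
    rintro y ⟨hyε, hyδ⟩
    rw [mem_pvDomain] at hyε hyδ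
    refine max_eq_right (sub_nonpos.2 (inv_sin_sq_half_le_inv_sin_sq_half ?_ ?_ hδ'))
    · intro h
      rw [h, abs_zero] at hyε
      linarith
    · rw [abs_of_pos hδ]
      by_contra! h
      exact hyδ ⟨h.le, hyε.2⟩
  case outer =>
    intro y hy
    rw [mem_pvDomain] at hy
    exact max_eq_left (sub_nonneg.2 (inv_sin_sq_half_le_inv_sin_sq_half hδ.ne'
      (by rw [abs_of_pos hδ]; exact hy.1) hy.2.le))

theorem sub_le_setIntegral_pvDomain {g : ℝ → ℝ} {A : ℝ} (hε : 0 ≤ ε) (hεπ : ε ≤ π)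
    (hg : IntegrableOn g (Ioo (x₀ - π) (x₀ + π))) (hgA : ∀ y, |g y| ≤ A) :
    (∫ y in Ioo (x₀ - π) (x₀ + π), g y) - 2 * ε * A ≤ ∫ y in pvDomain x₀ ε, g y := by
  have hcore : ∫ y in Ioo (x₀ - ε) (x₀ + ε), g y ≤ 2 * ε * A := by
    have := norm_setIntegral_le_of_norm_le_const (s := Ioo (x₀ - ε) (x₀ + ε)) (μ := volume)
      measure_Ioo_lt_top fun y _ => (Real.norm_eq_abs (g y)).trans_le (hgA y)
    rw [volume_real_Ioo_of_le (by linarith), Real.norm_eq_abs] at this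
    linarith [le_abs_self (∫ y in Ioo (x₀ - ε) (x₀ + ε), g y)]
  rw [pvDomain, setIntegral_sdiff measurableSet_Ioo hg (Ioo_subset_Ioo (by linarith) (by linarith))]
  linarith

end pvDomain

section lowerBound

variable {g : ℝ → ℝ} {x₀ A δ : ℝ}

theorem setIntegral_bathtubGap_pos (hg : Continuous g) (hg0 : ∀ y, 0 ≤ g y) (hgA : ∀ y, g y ≤ A)
    (hA : 0 < A) (hδ : 0 < δ) (hδπ : δ < π) :
    0 < ∫ y in Ioo (x₀ + δ / 2) (x₀ + π),
      bathtubGap A (sin (δ / 2) ^ 2)⁻¹ (g y) (sin ((x₀ - y) / 2) ^ 2)⁻¹ := by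
  set D := fun y => bathtubGap A (sin (δ / 2) ^ 2)⁻¹ (g y) (sin ((x₀ - y) / 2) ^ 2)⁻¹
  have hD : ContinuousOn D (Icc (x₀ + δ / 2) (x₀ + π)) := by
    have hK := (continuousOn_inv_sin_sq_half (x₀ := x₀) (half_pos hδ)).mono
      fun y (hy : y ∈ Icc (x₀ + δ / 2) (x₀ + π)) =>
        ⟨⟨by linarith [hy.1], hy.2⟩, fun h => by linarith [h.2, hy.1]⟩
    simp only [D, bathtubGap]
    fun_prop
  have hδ' : |δ| ≤ π := by rw [abs_of_pos hδ]; exact hδπ.le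
  obtain ⟨y, hy, hpos⟩ : ∃ y ∈ Icc (x₀ + δ / 2) (x₀ + π), 0 < D y := by
    by_contra! hle
    have hD0 : ∀ y ∈ Ioo (x₀ + δ / 2) (x₀ + π), D y = 0 := fun y hy =>
      le_antisymm (hle y (Ioo_subset_Icc_self hy)) (bathtubGap_nonneg (hg0 y) (hgA y))
    have hinner : ∀ y ∈ Ioo (x₀ + δ / 2) (x₀ + δ), g y = 0 := fun y hy =>
      eq_zero_of_bathtubGap_eq_zero (inv_sin_sq_half_lt_inv_sin_sq_half (by linarith [hy.1])
        (by rw [abs_of_pos hδ, abs_sub_comm, abs_of_pos (by linarith [hy.1])]; linarith [hy.2]) hδ')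
        (hD0 y ⟨hy.1, by linarith [hy.2]⟩)
    have houter : ∀ y ∈ Ioo (x₀ + δ) (x₀ + π), g y = A := fun y hy =>
      eq_of_bathtubGap_eq_zero (inv_sin_sq_half_lt_inv_sin_sq_half hδ.ne'
        (by rw [abs_of_pos hδ, abs_sub_comm, abs_of_pos (by linarith [hy.1])]; linarith [hy.1])
        (by rw [abs_sub_comm, abs_of_pos (by linarith [hy.1])]; linarith [hy.2]))
        (hD0 y ⟨by linarith [hy.1], hy.2⟩)
    have h0 := hg.apply_eq_of_forall_Ioo (by linarith) hinner (right_mem_Icc.2 (by linarith))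
    have hA' := hg.apply_eq_of_forall_Ioo (by linarith) houter (left_mem_Icc.2 (by linarith))
    linarith
  rw [← integral_Ioc_eq_integral_Ioo, ← intervalIntegral.integral_of_le (by linarith)]
  simpa using intervalIntegral.integral_lt_integral_of_continuousOn_of_le_of_exists_lt
    (f := 0) (by linarith) continuousOn_const hD
    (fun y _ => bathtubGap_nonneg (hg0 y) (hgA y)) ⟨y, hy, hpos⟩

theorem exists_pos_le_setIntegral_pvDomain (hg : Continuous g) (hg0 : ∀ y, 0 ≤ g y)
    (hgA : ∀ y, g y ≤ A) (hA : 0 < A) (hδ : 0 < δ) (hδπ : δ < π)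
    (hmass : ∫ y in Ioo (x₀ - π) (x₀ + π), g y = 2 * A * (π - δ)) :
    ∃ η > 0, ∀ ε ∈ Ioc 0 (δ / 2), 4 * A * cot (δ / 2) + η - 2 * A * ε * (sin (δ / 2) ^ 2)⁻¹ ≤
      ∫ y in pvDomain x₀ ε, g y / sin ((x₀ - y) / 2) ^ 2 := by
  refine ⟨_, setIntegral_bathtubGap_pos (x₀ := x₀) hg hg0 hgA hA hδ hδπ, ?_⟩
  rintro ε ⟨hε, hεδ⟩
  have hK := continuousOn_inv_sin_sq_half (x₀ := x₀) hε
  have hbathtub := le_setIntegral_mul_of_bathtub (c := (sin (δ / 2) ^ 2)⁻¹)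
    (t := Ioo (x₀ + δ / 2) (x₀ + π)) measurableSet_pvDomain
    (fun y hy => ⟨⟨by linarith [hy.1], hy.2⟩, fun h => by linarith [h.2, hy.1]⟩)
    (fun y _ => hg0 y) (fun y _ => hgA y) (integrableOn_pvDomain hg.continuousOn)
    (integrableOn_pvDomain (hg.continuousOn.mul hK))
    (integrableOn_pvDomain ((continuousOn_const.sub hK).sup continuousOn_const))
  rw [setIntegral_pvDomain_max_sub_inv_sin_sq_half hε (by linarith) hδπ.le] at hbathtub
  have hmass_ε := sub_le_setIntegral_pvDomain (x₀ := x₀) hε.le (by linarith)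
    (hg.integrableOn_Icc.mono_set Ioo_subset_Icc_self)
    fun y => abs_le.2 ⟨by linarith [hg0 y], hgA y⟩
  rw [hmass] at hmass_ε
  simp only [div_eq_mul_inv (g _)]
  have hc : 0 ≤ (sin (δ / 2) ^ 2)⁻¹ := by positivity
  nlinarith [mul_le_mul_of_nonneg_left hmass_ε hc]

theorem lt_of_tendsto_setIntegral_pvDomain (hg : Continuous g) (hg0 : ∀ y, 0 ≤ g y)
    (hgA : ∀ y, g y ≤ A) (hA : 0 < A) (hδ : 0 < δ) (hδπ : δ < π)
    (hmass : ∫ y in Ioo (x₀ - π) (x₀ + π), g y = 2 * A * (π - δ)) {I : ℝ}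
    (hI : Tendsto (fun ε => ∫ y in pvDomain x₀ ε, g y / sin ((x₀ - y) / 2) ^ 2) (𝓝[>] 0) (𝓝 I)) :
    4 * A * cot (δ / 2) < I := by
  obtain ⟨η, hη, hbound⟩ := exists_pos_le_setIntegral_pvDomain hg hg0 hgA hA hδ hδπ hmass
  have hlower : Tendsto (fun ε => 4 * A * cot (δ / 2) + η - 2 * A * ε * (sin (δ / 2) ^ 2)⁻¹)
      (𝓝[>] 0) (𝓝 (4 * A * cot (δ / 2) + η - 2 * A * 0 * (sin (δ / 2) ^ 2)⁻¹)) :=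
    (Continuous.tendsto (by fun_prop) 0).mono_left nhdsWithin_le_nhds
  have := le_of_tendsto_of_tendsto hlower hI <| by
    filter_upwards [Ioo_mem_nhdsGT (half_pos hδ)] with ε hε using hbound ε ⟨hε.1, hε.2.le⟩
  linarith

end lowerBound

/-- Lower bound for the half-Laplacian at a maximum point: if a continuous
`2π`-periodic `f` attains its maximum `M` at `x₀`, has minimum `m < M` and mean
`f̄`, then `Λf(x₀) > ((M−m)/π)·cot(π(f̄−m)/(2(M−m)))`. -/
theorem fractional_laplacian_max_lower_bound (f : ℝ → ℝ) (x₀ M m fbar L : ℝ)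
    (hf : Continuous f) (hper : Function.Periodic f (2*π))
    (hmax : ∀ x : ℝ, f x ≤ f x₀) (hM : M = f x₀)
    (hmin : ∀ x : ℝ, m ≤ f x) (hm : ∃ x₁ : ℝ, f x₁ = m)
    (hMm : m < M)
    (hbar : fbar = (1/(2*π)) * ∫ x in (-π)..π, f x)
    (hL : Filter.Tendsto (fun ε : ℝ =>
        (1/(4*π)) * ∫ y in Set.Ioo (x₀ - π) (x₀ + π) \ Set.Ioo (x₀ - ε) (x₀ + ε),
          (f x₀ - f y) / (Real.sin ((x₀ - y)/2))^2)
        (𝓝[>] 0) (𝓝 L)) :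
    L > ((M - m)/π) *
      (Real.cos (π*(fbar - m)/(2*(M - m))) / Real.sin (π*(fbar - m)/(2*(M - m)))) := by
  have hπ := pi_pos
  have hT : (0 : ℝ) < 2 * π := by positivity
  have hperiod : ∫ x in (-π)..(-π + 2 * π), f x = 2 * π * fbar := by
    rw [show -π + 2 * π = π by ring, hbar]
    field_simp
  have hfbar_lt : fbar < M := by
    have := hper.intervalIntegral_lt_mul hT hf (fun x => hM ▸ hmax x)
      (hm.imp fun x hx => by linarith) (-π)
    nlinarith
  have hlt_fbar : m < fbar := by
    have := hper.mul_lt_intervalIntegral hT hf hmin ⟨x₀, by linarith⟩ (-π)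
    nlinarith
  have hA : 0 < M - m := sub_pos.2 hMm
  set δ := π * (fbar - m) / (M - m) with hδ
  have hmass : ∫ y in Ioo (x₀ - π) (x₀ + π), (f x₀ - f y) = 2 * (M - m) * (π - δ) := by
    rw [show x₀ + π = x₀ - π + 2 * π by ring, Function.Periodic.setIntegral_Ioo_eq
        (f := fun y => f x₀ - f y) (fun y => congrArg (f x₀ - ·) (hper y)) hT.le _ (-π),
      intervalIntegral.integral_sub intervalIntegrable_const (hf.intervalIntegrable _ _),
      intervalIntegral.integral_const, smul_eq_mul, hperiod, ← hM, hδ]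
    field_simp
    ring
  have key := lt_of_tendsto_setIntegral_pvDomain (g := fun y => f x₀ - f y) (x₀ := x₀)
    (continuous_const.sub hf) (fun y => sub_nonneg.2 (hmax y)) (fun y => by linarith [hmin y]) hA
    (by positivity) (by rw [hδ, div_lt_iff₀ hA]; nlinarith) hmass
    ((hL.const_mul (4 * π)).congr fun ε => by field_simp; rfl)
  rw [← cot_eq_cos_div_sin, show π * (fbar - m) / (2 * (M - m)) = δ / 2 by
      rw [hδ, div_div, mul_comm 2],
    gt_iff_lt, div_mul_eq_mul_div, div_lt_iff₀ hπ]
  linarith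
end

section
/- Let u ∈ C¹(ℝ) be 2π-periodic with amplitude V = max u − min u > 0, let v = u', and let x₀ be a point where v attains its maximum. Then 8πV·Λv(x₀) ≥ v(x₀)², where Λv(x₀) = (1/π) p.v. ∫_ℝ (v(x₀) − v(x₀+y))/y² dy. -/
/-!
Write `M = v(x₀)` and let `c` be the midpoint of the range of `u`, so that `|u - c| ≤ V/2`.
Since `v ≤ M`, the integrand `(M - v(x₀ + y)) / y²` is nonnegative. On `[a, b] ⊆ (0, ∞)`,
integrating `v(x₀ ± y) / y²` by parts against the bounded primitive `±(u(x₀ ± y) - c)` shows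
that `∫_a^b (M - v(x₀ ± y)) / y²` differs from `M/a - M/b` by at most `V/a²`. Being uniform in
`b`, this bound makes the integrand integrable on `|y| ≥ ε`. On the annulus `r ≤ |y| ≤ 2r` it
gives the lower bound `M/r - 2V/r²`, whose maximum `M²/(8V)`, at `r = 4V/M`, bounds `π Λv(x₀)`
from below.
-/

open Real Set Filter Topology MeasureTheory

theorem hasDerivAt_neg_div_sub_div_sq {g : ℝ → ℝ} {g' m s y : ℝ} (hg : HasDerivAt g g' y)
    (hy : y ≠ 0) :
    HasDerivAt (fun y => -(m / y) - (g y - s) / y ^ 2)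
      (m / y ^ 2 - g' / y ^ 2 + 2 * (g y - s) / y ^ 3) y := by
  have h₁ := ((hasDerivAt_inv hy).const_mul m).fun_neg
  have h₂ := (hg.sub_const s).fun_div (hasDerivAt_pow 2 y) (pow_ne_zero 2 hy)
  refine (h₁.fun_sub h₂).congr_deriv ?_
  field_simp
  ring

section IntegrationByParts

variable {g g' : ℝ → ℝ} {m K a b : ℝ}

theorem le_integral_sub_deriv_div_sq (ha : 0 < a) (hab : a ≤ b)
    (hg : ∀ y ∈ Icc a b, HasDerivAt g (g' y) y) (hg' : ContinuousOn g' (Icc a b))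
    (hK : ∀ y ∈ Icc a b, |g y| ≤ K) :
    m / a - m / b - 2 * K / a ^ 2 ≤ ∫ y in a..b, (m - g' y) / y ^ 2 := by
  have hpos : ∀ y ∈ Icc a b, 0 < y := fun y hy => ha.trans_le hy.1
  have hH : ∀ y ∈ Icc a b, HasDerivAt (fun y => -(m / y) - (g y - K) / y ^ 2)
      (m / y ^ 2 - g' y / y ^ 2 + 2 * (g y - K) / y ^ 3) y := fun y hy =>
    hasDerivAt_neg_div_sub_div_sq (hg y hy) (hpos y hy).ne'
  have hint : IntegrableOn (fun y => (m - g' y) / y ^ 2) (Icc a b) :=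
    ((continuousOn_const.sub hg').div (continuousOn_pow 2)
      fun y hy => pow_ne_zero 2 (hpos y hy).ne').integrableOn_Icc
  -- Since `g ≤ K`, the derivative of the comparison function lies below the integrand.
  have hcompare := intervalIntegral.sub_le_integral_of_hasDeriv_right_of_le hab
    (fun y hy => (hH y hy).continuousAt.continuousWithinAt)
    (fun y hy => (hH y (Ioo_subset_Icc_self hy)).hasDerivWithinAt) hint fun y hy => by
      have hy := Ioo_subset_Icc_self hy
      have : 2 * (g y - K) / y ^ 3 ≤ 0 :=
        div_nonpos_of_nonpos_of_nonneg (by linarith [(abs_le.1 (hK y hy)).2])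
          (pow_pos (hpos y hy) 3).le
      linarith [sub_div m (g' y) (y ^ 2)]
  have hb : (g b - K) / b ^ 2 ≤ 0 :=
    div_nonpos_of_nonpos_of_nonneg (by linarith [(abs_le.1 (hK b ⟨hab, le_rfl⟩)).2])
      (sq_nonneg b)
  have ha : -(2 * K / a ^ 2) ≤ (g a - K) / a ^ 2 := by
    rw [← neg_div]
    gcongr
    linarith [(abs_le.1 (hK a ⟨le_rfl, hab⟩)).1]
  linarith

theorem integral_sub_deriv_div_sq_le (ha : 0 < a) (hab : a ≤ b)
    (hg : ∀ y ∈ Icc a b, HasDerivAt g (g' y) y) (hg' : ContinuousOn g' (Icc a b))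
    (hK : ∀ y ∈ Icc a b, |g y| ≤ K) :
    ∫ y in a..b, (m - g' y) / y ^ 2 ≤ m / a - m / b + 2 * K / a ^ 2 := by
  have hneg := le_integral_sub_deriv_div_sq (m := -m) ha hab (fun y hy => (hg y hy).neg) hg'.neg
    fun y hy => (abs_neg (g y)).symm ▸ hK y hy
  have hflip : ∫ y in a..b, (-m - -g' y) / y ^ 2 = -∫ y in a..b, (m - g' y) / y ^ 2 := by
    rw [← intervalIntegral.integral_neg]
    congr 1
    ext y
    ring
  rw [hflip] at hneg
  linarith [neg_div a m, neg_div b m]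

end IntegrationByParts

section BoundedPrimitive

variable {g g' : ℝ → ℝ} {m K : ℝ}

theorem nonneg_of_deriv_le_of_abs_le (hg : ∀ y, HasDerivAt g (g' y) y) (hK : ∀ y, |g y| ≤ K)
    (hm : ∀ y, g' y ≤ m) : 0 ≤ m := by
  by_contra! hm0
  have hK0 : 0 ≤ K := (abs_nonneg _).trans (hK 0)
  set t := (2 * K + 1) / -m
  have ht : 0 < t := div_pos (by linarith) (by linarith)
  obtain ⟨ξ, -, hξ⟩ := exists_hasDerivAt_eq_slope g g' ht
    (fun y _ => (hg y).continuousAt.continuousWithinAt) fun y _ => hg y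
  have hdrop : g t - g 0 ≤ -(2 * K + 1) :=
    calc g t - g 0 = g' ξ * t := by rw [hξ, sub_zero, div_mul_cancel₀ _ ht.ne']
      _ ≤ m * t := mul_le_mul_of_nonneg_right (hm ξ) ht.le
      _ = -(2 * K + 1) := by simp only [t]; field_simp [hm0.ne]
  linarith [(abs_le.1 (hK t)).1, (abs_le.1 (hK 0)).2]

theorem integrableOn_Ioi_sub_deriv_div_sq {a : ℝ} (hg : ∀ y, HasDerivAt g (g' y) y)
    (hg' : Continuous g') (hK : ∀ y, |g y| ≤ K) (hm : ∀ y, g' y ≤ m) (ha : 0 < a) :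
    IntegrableOn (fun y => (m - g' y) / y ^ 2) (Ioi a) := by
  have hcont : ∀ b, ContinuousOn (fun y => (m - g' y) / y ^ 2) (Icc a b) := fun b =>
    (continuous_const.sub hg').continuousOn.div (continuousOn_pow 2)
      fun y hy => pow_ne_zero 2 (ha.trans_le hy.1).ne'
  refine integrableOn_Ioi_of_intervalIntegral_norm_bounded (m / a + 2 * K / a ^ 2) a
    (fun b => (hcont b).integrableOn_Icc.mono_set Ioc_subset_Icc_self) tendsto_id ?_
  filter_upwards [eventually_ge_atTop a] with b hab
  have hnorm : ∫ y in a..b, ‖(m - g' y) / y ^ 2‖ = ∫ y in a..b, (m - g' y) / y ^ 2 :=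
    intervalIntegral.integral_congr fun y _ =>
      Real.norm_of_nonneg (div_nonneg (sub_nonneg.2 (hm y)) (sq_nonneg y))
  have hmb : 0 ≤ m / b :=
    div_nonneg (nonneg_of_deriv_le_of_abs_le hg hK hm) (ha.trans_le hab).le
  rw [hnorm]
  linarith [integral_sub_deriv_div_sq_le (m := m) ha hab (fun y _ => hg y) hg'.continuousOn
    fun y _ => hK y]

theorem le_setIntegral_Ioi_sub_deriv_div_sq {ε r : ℝ} (hg : ∀ y, HasDerivAt g (g' y) y)
    (hg' : Continuous g') (hK : ∀ y, |g y| ≤ K) (hm : ∀ y, g' y ≤ m) (hε : 0 < ε) (hεr : ε ≤ r) :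
    m / (2 * r) - 2 * K / r ^ 2 ≤ ∫ y in Ioi ε, (m - g' y) / y ^ 2 := by
  have hr : 0 < r := hε.trans_le hεr
  have hannulus := le_integral_sub_deriv_div_sq (m := m) (b := 2 * r) hr (by linarith)
    (fun y _ => hg y) hg'.continuousOn fun y _ => hK y
  have hhalf : m / r - m / (2 * r) = m / (2 * r) := by field_simp; ring
  calc m / (2 * r) - 2 * K / r ^ 2 ≤ ∫ y in r..2 * r, (m - g' y) / y ^ 2 := by linarith
    _ = ∫ y in Ioc r (2 * r), (m - g' y) / y ^ 2 := intervalIntegral.integral_of_le (by linarith)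
    _ ≤ ∫ y in Ioi ε, (m - g' y) / y ^ 2 :=
      setIntegral_mono_set (integrableOn_Ioi_sub_deriv_div_sq hg hg' hK hm hε)
        (.of_forall fun y => div_nonneg (sub_nonneg.2 (hm y)) (sq_nonneg y))
        (Ioc_subset_Ioi_self.trans (Ioi_subset_Ioi hεr)).eventuallyLE

end BoundedPrimitive

theorem setIntegral_setOf_le_abs {E : Type*} [NormedAddCommGroup E] [NormedSpace ℝ E]
    {f : ℝ → E} {ε : ℝ} (hε : 0 < ε) (hpos : IntegrableOn f (Ioi ε))
    (hneg : IntegrableOn (fun y => f (-y)) (Ioi ε)) :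
    ∫ y in {y : ℝ | ε ≤ |y|}, f y = (∫ y in Ioi ε, f y) + ∫ y in Ioi ε, f (-y) := by
  have hset : {y : ℝ | ε ≤ |y|} = Iic (-ε) ∪ Ici ε := by
    ext y
    simp only [mem_ofPred_eq, mem_union, mem_Iic, mem_Ici, le_abs, le_neg]
    tauto
  have hneg' : IntegrableOn f (Iic (-ε)) := by
    rw [← (Measure.measurePreserving_neg volume).integrableOn_comp_preimage
      (Homeomorph.neg ℝ).measurableEmbedding]
    simpa [Function.comp_def, integrableOn_Ici_iff_integrableOn_Ioi] using hneg
  rw [hset, setIntegral_union (Iic_disjoint_Ici.2 (by linarith)) measurableSet_Ici hneg'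
    ((integrableOn_Ici_iff_integrableOn_Ioi).2 hpos), integral_Ici_eq_integral_Ioi,
    integral_comp_neg_Ioi, add_comm]

theorem le_setIntegral_setOf_le_abs_sub_deriv_div_sq {u : ℝ → ℝ} {M c K x₀ ε r : ℝ}
    (hu : Differentiable ℝ u) (hu' : Continuous (deriv u)) (hM : ∀ x, deriv u x ≤ M)
    (hK : ∀ x, |u x - c| ≤ K) (hε : 0 < ε) (hεr : ε ≤ r) :
    M / r - 4 * K / r ^ 2 ≤ ∫ y in {y : ℝ | ε ≤ |y|}, (M - deriv u (x₀ + y)) / y ^ 2 := by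
  have hright : ∀ y, HasDerivAt (fun y => u (x₀ + y) - c) (deriv u (x₀ + y)) y := fun y =>
    ((hu _).hasDerivAt.comp_const_add x₀ y).sub_const c
  have hleft : ∀ y, HasDerivAt (fun y => c - u (x₀ - y)) (deriv u (x₀ - y)) y := fun y => by
    simpa using ((hu _).hasDerivAt.comp_const_sub x₀ y).const_sub c
  have hKleft : ∀ y, |c - u (x₀ - y)| ≤ K := fun y => abs_sub_comm c _ ▸ hK _
  have hflip : (fun y => (M - deriv u (x₀ + -y)) / (-y) ^ 2)
      = fun y => (M - deriv u (x₀ - y)) / y ^ 2 := by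
    ext y
    rw [neg_sq, ← sub_eq_add_neg]
  rw [setIntegral_setOf_le_abs hε
    (integrableOn_Ioi_sub_deriv_div_sq hright (by fun_prop) (fun _ => hK _) (fun _ => hM _) hε)
    (hflip ▸ integrableOn_Ioi_sub_deriv_div_sq hleft (by fun_prop) hKleft (fun _ => hM _) hε),
    hflip]
  have hR := le_setIntegral_Ioi_sub_deriv_div_sq hright (by fun_prop) (fun _ => hK _)
    (fun _ => hM _) hε hεr
  have hL := le_setIntegral_Ioi_sub_deriv_div_sq hleft (by fun_prop) hKleft (fun _ => hM _) hε hεr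
  have hsplit : M / r - 4 * K / r ^ 2 = 2 * (M / (2 * r) - 2 * K / r ^ 2) := by
    field_simp
    ring
  linarith

theorem enhanced_max_principle_sq_general (u : ℝ → ℝ) (Mx mn V x₀ L : ℝ)
    (hu : ContDiff ℝ 2 u)
    (hMx : IsGreatest (Set.range u) Mx) (hmn : IsLeast (Set.range u) mn)
    (hV : V = Mx - mn) (hVpos : 0 < V)
    (hmax : ∀ x : ℝ, deriv u x ≤ deriv u x₀)
    (hL : Filter.Tendsto (fun ε : ℝ =>
        (1/π) * ∫ y in {y : ℝ | ε ≤ |y|}, (deriv u x₀ - deriv u (x₀ + y)) / y^2)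
        (𝓝[>] 0) (𝓝 L)) :
    (deriv u x₀)^2 ≤ 8*π*V*L := by
  have hud : Differentiable ℝ u := hu.differentiable two_ne_zero
  have hv : Continuous (deriv u) := hu.continuous_deriv one_le_two
  have hK : ∀ x, |u x - (Mx + mn) / 2| ≤ V / 2 := fun x => by
    have := hMx.2 (mem_range_self x)
    have := hmn.2 (mem_range_self x)
    rw [abs_le, hV]
    constructor <;> linarith
  set M := deriv u x₀
  have hM : 0 ≤ M := nonneg_of_deriv_le_of_abs_le (fun x => (hud x).hasDerivAt.sub_const _) hK hmax
  have hlim : ∀ b, (∀ᶠ ε in 𝓝[>] 0, b ≤ ∫ y in {y : ℝ | ε ≤ |y|}, (M - deriv u (x₀ + y)) / y ^ 2) →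
      b / π ≤ L := fun b hb => ge_of_tendsto hL <| hb.mono fun ε hε => by
    rw [one_div_mul_eq_div]
    exact div_le_div_of_nonneg_right hε pi_pos.le
  rcases hM.eq_or_lt with hM0 | hMpos
  · have hL0 : 0 ≤ L := by
      simpa using hlim 0 <| .of_forall fun ε => integral_nonneg fun y =>
        div_nonneg (sub_nonneg.2 (hmax _)) (sq_nonneg y)
    rw [← hM0, zero_pow two_ne_zero]
    exact mul_nonneg (by positivity) hL0
  · have hbound := hlim (M ^ 2 / (8 * V)) <| by
      filter_upwards [Ioc_mem_nhdsGT (by positivity : (0 : ℝ) < 4 * V / M)] with ε hε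
      convert le_setIntegral_setOf_le_abs_sub_deriv_div_sq hud hv hmax hK hε.1 hε.2 using 1
      field_simp
      ring
    calc M ^ 2 = 8 * π * V * (M ^ 2 / (8 * V) / π) := by field_simp
      _ ≤ 8 * π * V * L := by gcongr

/-- Enhanced nonlinear maximum principle, part 1: if `u` is `2π`-periodic with
amplitude `V = max u − min u > 0`, `v = u'`, and `x₀` is a maximum point of `v`,
then `8πV·Λv(x₀) ≥ v(x₀)²`. -/
theorem enhanced_max_principle_sq (u : ℝ → ℝ) (Mx mn V x₀ L : ℝ)
    (hu : ContDiff ℝ 2 u) (hper : Function.Periodic u (2*π))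
    (hMx : IsGreatest (Set.range u) Mx) (hmn : IsLeast (Set.range u) mn)
    (hV : V = Mx - mn) (hVpos : 0 < V)
    (hmax : ∀ x : ℝ, deriv u x ≤ deriv u x₀)
    (hL : Filter.Tendsto (fun ε : ℝ =>
        (1/π) * ∫ y in {y : ℝ | ε ≤ |y|}, (deriv u x₀ - deriv u (x₀ + y)) / y^2)
        (𝓝[>] 0) (𝓝 L)) :
    (deriv u x₀)^2 ≤ 8*π*V*L :=
  enhanced_max_principle_sq_general u Mx mn V x₀ L hu hMx hmn hV hVpos hmax hL
end

section
/- Let u ∈ C¹(ℝ) be 2π-periodic with amplitude V = max u − min u, let v = u', and let x₀ be a point of maximum of v. Then Λv(x₀) ≥ max(v(x₀) − πV, 0). -/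
open Real Set Filter Topology MeasureTheory

/-! Since `v(x₀)` is the maximum of `v`, the integrand `(v(x₀) - v(x₀+y))/y²` is nonnegative,
so `Λv(x₀) ≥ 0`. For the other bound, restrict the integral to `ε ≤ |y| ≤ δ` and use
`1/y² ≥ 1/δ²`: by the fundamental theorem of calculus the integral of `v(x₀) - v(x₀+y)` over
each of the two intervals is `(δ - ε) v(x₀)` minus an increment of `u`, which is at most `V`.
Letting `ε → 0` gives `Λv(x₀) ≥ (2δ v(x₀) - 2V)/(πδ²)`, which is `v(x₀) - πV/2` for `δ = 2/π`.
The truncated integrals converge because `v`, being continuous and periodic, is bounded. -/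

theorem Function.Periodic.deriv {𝕜 F : Type*} [NontriviallyNormedField 𝕜] [NormedAddCommGroup F]
    [NormedSpace 𝕜 F] {f : 𝕜 → F} {c : 𝕜} (hf : Periodic f c) : Periodic (deriv f) c :=
  fun x => by rw [← deriv_comp_add_const, show (fun y => f (y + c)) = f from funext hf]

lemma measurableSet_le_abs (ε : ℝ) : MeasurableSet {y : ℝ | ε ≤ |y|} :=
  measurableSet_le measurable_const measurable_abs

lemma integrableOn_div_sq_of_isBounded {w : ℝ → ℝ} (hw : Measurable w)
    (hb : Bornology.IsBounded (range w)) {ε : ℝ} (hε : 0 < ε) :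
    IntegrableOn (fun y => w y / y ^ 2) {y | ε ≤ |y|} := by
  obtain ⟨B, hB⟩ := isBounded_iff_forall_norm_le.1 hb
  refine Integrable.mono'
    (integrable_inv_one_add_sq.const_mul (B * (1 + (ε ^ 2)⁻¹))).integrableOn
    (hw.div (measurable_id.pow_const 2)).aestronglyMeasurable ?_
  filter_upwards [ae_restrict_mem (measurableSet_le_abs ε)] with y hy
  -- `1 / y² ≤ (1 + ε⁻²) / (1 + y²)` as soon as `ε ≤ |y|`
  have hεy : ε ^ 2 ≤ y ^ 2 := by simpa only [sq_abs] using pow_le_pow_left₀ hε.le hy 2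
  have hB' : ‖w y‖ ≤ B := hB _ (mem_range_self y)
  rw [norm_div, norm_pow, Real.norm_eq_abs y, sq_abs]
  calc ‖w y‖ / y ^ 2 ≤ B / y ^ 2 := by gcongr
    _ ≤ B * (1 + (ε ^ 2)⁻¹) * (1 + y ^ 2)⁻¹ := by
      have hB0 : 0 ≤ B := (norm_nonneg _).trans hB'
      have hε2 : 0 < ε ^ 2 := by positivity
      rw [div_le_iff₀ (hε2.trans_le hεy), mul_assoc, mul_assoc]
      refine le_mul_of_one_le_right hB0 ?_
      field_simp
      nlinarith

section

variable {f f' : ℝ → ℝ} (hf : ∀ y, HasDerivAt f (f' y) y) (hf' : Continuous f') {M : ℝ}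
  (hM : ∀ y, f' y ≤ M)
include hf hf' hM

lemma div_le_setIntegral_Icc_sub_div_sq {a b D : ℝ} (hab : a ≤ b)
    (hD : ∀ y ∈ Icc a b, 0 < y ^ 2 ∧ y ^ 2 ≤ D) :
    ((b - a) * M - (f b - f a)) / D ≤ ∫ y in Icc a b, (M - f' y) / y ^ 2 := by
  have hftc : ∫ y in Icc a b, (M - f' y) = (b - a) * M - (f b - f a) := by
    rw [integral_Icc_eq_integral_Ioc, ← intervalIntegral.integral_of_le hab,
      intervalIntegral.integral_sub intervalIntegrable_const (hf'.intervalIntegrable _ _),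
      intervalIntegral.integral_const, smul_eq_mul,
      intervalIntegral.integral_eq_sub_of_hasDerivAt (fun y _ => hf y) (hf'.intervalIntegrable _ _)]
  have hcont : ContinuousOn (fun y => (M - f' y) / y ^ 2) (Icc a b) :=
    (continuous_const.sub hf').continuousOn.div (by fun_prop) fun y hy => (hD y hy).1.ne'
  rw [← hftc, ← integral_div]
  refine setIntegral_mono_on ((continuous_const.sub hf').div_const D).integrableOn_Icc
    (hcont.integrableOn_compact isCompact_Icc) measurableSet_Icc fun y hy => ?_
  exact div_le_div_of_nonneg_left (sub_nonneg.2 (hM y)) (hD y hy).1 (hD y hy).2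

lemma div_le_setIntegral_le_abs_sub_div_sq {V : ℝ} (hV : ∀ a b, f b - f a ≤ V) {ε δ : ℝ}
    (hε : 0 < ε) (hεδ : ε ≤ δ)
    (hint : IntegrableOn (fun y => (M - f' y) / y ^ 2) {y | ε ≤ |y|}) :
    (2 * (δ - ε) * M - 2 * V) / δ ^ 2 ≤ ∫ y in {y | ε ≤ |y|}, (M - f' y) / y ^ 2 := by
  have hneg : Icc (-δ) (-ε) ⊆ {y | ε ≤ |y|} := fun y hy => le_abs.2 (Or.inr (le_neg.2 hy.2))
  have hpos : Icc ε δ ⊆ {y | ε ≤ |y|} := fun y hy => le_abs.2 (Or.inl hy.1)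
  have hdisj : Disjoint (Icc (-δ) (-ε)) (Icc ε δ) :=
    disjoint_left.2 fun y hy hy' => by linarith [hy.2, hy'.1]
  have hsq : ∀ y, ε ≤ |y| → |y| ≤ δ → 0 < y ^ 2 ∧ y ^ 2 ≤ δ ^ 2 := fun y h1 h2 => by
    rw [← sq_abs]; exact ⟨pow_pos (hε.trans_le h1) 2, pow_le_pow_left₀ (abs_nonneg y) h2 2⟩
  have hA := div_le_setIntegral_Icc_sub_div_sq hf hf' hM (D := δ ^ 2) (neg_le_neg hεδ)
    fun y hy => hsq y (hneg hy) (abs_le.2 ⟨hy.1, by linarith [hy.2]⟩)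
  have hB := div_le_setIntegral_Icc_sub_div_sq hf hf' hM (D := δ ^ 2) hεδ
    fun y hy => hsq y (hpos hy) (abs_le.2 ⟨by linarith [hy.1], hy.2⟩)
  have hg : 0 ≤ᵐ[volume.restrict {y | ε ≤ |y|}] fun y => (M - f' y) / y ^ 2 :=
    ae_of_all _ fun y => div_nonneg (sub_nonneg.2 (hM y)) (sq_nonneg y)
  have hδ : 0 < δ ^ 2 := pow_pos (hε.trans_le hεδ) 2
  calc (2 * (δ - ε) * M - 2 * V) / δ ^ 2
      ≤ ((-ε - -δ) * M - (f (-ε) - f (-δ))) / δ ^ 2 + ((δ - ε) * M - (f δ - f ε)) / δ ^ 2 := by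
        rw [← add_div]; gcongr; linarith [hV (-δ) (-ε), hV ε δ]
    _ ≤ (∫ y in Icc (-δ) (-ε), (M - f' y) / y ^ 2) + ∫ y in Icc ε δ, (M - f' y) / y ^ 2 :=
        add_le_add hA hB
    _ = ∫ y in Icc (-δ) (-ε) ∪ Icc ε δ, (M - f' y) / y ^ 2 :=
        (setIntegral_union hdisj measurableSet_Icc (hint.mono_set hneg) (hint.mono_set hpos)).symm
    _ ≤ ∫ y in {y | ε ≤ |y|}, (M - f' y) / y ^ 2 :=
        setIntegral_mono_set hint hg (union_subset hneg hpos).eventuallyLE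

end

/-- Enhanced nonlinear maximum principle, part 2: if `u` is `2π`-periodic with
amplitude `V = max u − min u`, `v = u'`, and `x₀` is a maximum point of `v`,
then `Λv(x₀) ≥ max(v(x₀) − πV, 0)`. -/
theorem enhanced_max_principle_linear (u : ℝ → ℝ) (Mx mn V x₀ L : ℝ)
    (hu : ContDiff ℝ 2 u) (hper : Function.Periodic u (2*π))
    (hMx : IsGreatest (Set.range u) Mx) (hmn : IsLeast (Set.range u) mn)
    (hV : V = Mx - mn)
    (hmax : ∀ x : ℝ, deriv u x ≤ deriv u x₀)
    (hL : Filter.Tendsto (fun ε : ℝ =>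
        (1/π) * ∫ y in {y : ℝ | ε ≤ |y|}, (deriv u x₀ - deriv u (x₀ + y)) / y^2)
        (𝓝[>] 0) (𝓝 L)) :
    L ≥ max (deriv u x₀ - π*V) 0 := by
  set M := deriv u x₀
  have hf : ∀ y, HasDerivAt (fun y => u (x₀ + y)) (deriv u (x₀ + y)) y := fun y =>
    ((hu.differentiable two_ne_zero) _).hasDerivAt.comp_const_add x₀ y
  have hf' : Continuous fun y => deriv u (x₀ + y) := by
    have := hu.continuous_deriv one_le_two
    fun_prop
  have hosc : ∀ a b, u (x₀ + b) - u (x₀ + a) ≤ V := fun a b => by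
    linarith [hMx.2 (mem_range_self (x₀ + b)), hmn.2 (mem_range_self (x₀ + a))]
  have hint : ∀ ε > 0, IntegrableOn (fun y => (M - deriv u (x₀ + y)) / y ^ 2) {y | ε ≤ |y|} :=
    fun ε hε => integrableOn_div_sq_of_isBounded (continuous_const.sub hf').measurable
      (((hper.deriv.const_add x₀).comp (M - ·)).isBounded_of_continuous two_pi_pos.ne'
        (continuous_const.sub hf')) hε
  have hL_nonneg : 0 ≤ L := ge_of_tendsto hL <| eventually_nhdsWithin_of_forall fun ε _ =>
    mul_nonneg (by positivity) <| setIntegral_nonneg (measurableSet_le_abs ε)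
      fun y _ => div_nonneg (sub_nonneg.2 (hmax _)) (sq_nonneg y)
  -- `δ = 2/π` makes the coefficient of `M` in `(2δM - 2V)/(πδ²)` equal to `1`
  set δ := 2 / π
  have hδ : 0 < δ := by positivity
  set φ := fun ε => (1/π) * ((2 * (δ - ε) * M - 2 * V) / δ ^ 2)
  have hL_ge : φ 0 ≤ L := by
    refine le_of_tendsto_of_tendsto (((by fun_prop : Continuous φ).tendsto 0).mono_left
      nhdsWithin_le_nhds) hL ?_
    filter_upwards [Ioo_mem_nhdsGT hδ] with ε hε
    exact mul_le_mul_of_nonneg_left (div_le_setIntegral_le_abs_sub_div_sq hf hf'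
      (fun y => hmax _) hosc hε.1 hε.2.le (hint ε hε.1)) (by positivity)
  have hVnn : 0 ≤ V := by linarith [hmn.2 hMx.1]
  have hφ0 : φ 0 = M - π * V / 2 := by
    simp only [φ, δ]; field_simp; ring
  rw [hφ0] at hL_ge
  exact max_le (by nlinarith [pi_pos]) hL_nonneg
end

section
/- Let ω be a concave increasing modulus of continuity with ω(0) = 0, and let u : ℝ → ℝ satisfy |u(x) − u(y)| ≤ ω(|x − y|) for all x, y. Suppose u(x) − u(y) = ω(ξ) where ξ = x − y > 0. Then Λu(x) − Λu(y) ≥ (1/π)[∫_0^{ξ/2} (2ω(ξ) − ω(ξ+2η) − ω(ξ−2η))/η² dη + ∫_{ξ/2}^∞ (2ω(ξ) − ω(ξ+2η) + ω(2η−ξ))/η² dη], and both integrands are nonnegative. -/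
open Real Set Filter Topology MeasureTheory

/-- Nonnegativity of a monotone modulus. -/
private lemma mod_nonneg {ω : ℝ → ℝ} (hω0 : ω 0 = 0) (hmono : MonotoneOn ω (Set.Ici 0))
    {a : ℝ} (ha : 0 ≤ a) : 0 ≤ ω a := by
  have := hmono (Set.self_mem_Ici) (Set.mem_Ici.2 ha) ha
  simpa [hω0] using this

/-- Subadditivity of a concave modulus. -/
private lemma mod_subadd {ω : ℝ → ℝ} (hω0 : ω 0 = 0) (hconc : ConcaveOn ℝ (Set.Ici 0) ω)
    {a b : ℝ} (ha : 0 ≤ a) (hb : 0 ≤ b) : ω (a + b) ≤ ω a + ω b := by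
  rcases eq_or_lt_of_le (by positivity : (0:ℝ) ≤ a + b) with h | h
  · have ha0 : a = 0 := by linarith
    have hb0 : b = 0 := by linarith
    simp [ha0, hb0, hω0]
  · set s := a + b with hs
    have hsne : s ≠ 0 := ne_of_gt h
    have h1 : (a/s) • ω s + (b/s) • ω 0 ≤ ω ((a/s) • s + (b/s) • (0:ℝ)) :=
      hconc.2 (Set.mem_Ici.2 h.le) (Set.mem_Ici.2 le_rfl) (by positivity) (by positivity)
        (by field_simp; linarith)
    have h2 : (b/s) • ω s + (a/s) • ω 0 ≤ ω ((b/s) • s + (a/s) • (0:ℝ)) :=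
      hconc.2 (Set.mem_Ici.2 h.le) (Set.mem_Ici.2 le_rfl) (by positivity) (by positivity)
        (by field_simp; ring)
    have e1 : (a/s) • s + (b/s) • (0:ℝ) = a := by simp only [smul_eq_mul, mul_zero, add_zero]; field_simp
    have e2 : (b/s) • s + (a/s) • (0:ℝ) = b := by simp only [smul_eq_mul, mul_zero, add_zero]; field_simp
    rw [e1] at h1; rw [e2] at h2
    have h3 := add_le_add h1 h2
    simp only [smul_eq_mul, hω0, mul_zero, add_zero] at h3
    have hfrac : a/s + b/s = 1 := by field_simp; linarith
    have e3 : a/s * ω s + b/s * ω s = ω s := by rw [← add_mul, hfrac, one_mul]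
    calc ω (a+b) = ω s := by rw [hs]
    _ = a/s * ω s + (b/s * ω s) := e3.symm ▸ rfl
    _ ≤ ω a + ω b := by linarith

/-- Midpoint concavity. -/
private lemma mod_mid {ω : ℝ → ℝ} (hconc : ConcaveOn ℝ (Set.Ici 0) ω)
    {a b : ℝ} (ha : 0 ≤ a) (hb : 0 ≤ b) : ω a + ω b ≤ 2 * ω ((a+b)/2) := by
  have h := hconc.2 (Set.mem_Ici.2 ha) (Set.mem_Ici.2 hb)
    (by norm_num : (0:ℝ) ≤ 1/2) (by norm_num : (0:ℝ) ≤ 1/2) (by norm_num)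
  simp only [smul_eq_mul] at h
  have harg : (1/2:ℝ)*a + (1/2)*b = (a+b)/2 := by ring
  rw [harg] at h
  linarith

/-- `ω (2a) ≤ 2 ω a`. -/
private lemma mod_double {ω : ℝ → ℝ} (hω0 : ω 0 = 0) (hconc : ConcaveOn ℝ (Set.Ici 0) ω)
    {a : ℝ} (ha : 0 ≤ a) : ω (2*a) ≤ 2 * ω a := by
  have := mod_mid hconc (a := 2*a) (b := 0) (by linarith) le_rfl
  have harg : (2*a + 0)/2 = a := by ring
  rw [harg, hω0] at this
  linarith

/-- Interval integrability of a bounded measurable function. -/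
private lemma bddII {f : ℝ → ℝ} {a b C : ℝ} (hm : Measurable f)
    (hb : ∀ t ∈ Set.uIoc a b, |f t| ≤ C) : IntervalIntegrable f volume a b := by
  rw [intervalIntegrable_iff]
  apply Measure.integrableOn_of_bounded (M := C)
  · exact (measure_Ioc_lt_top).ne
  · exact hm.aestronglyMeasurable
  · exact (ae_restrict_iff' measurableSet_uIoc).2 (ae_of_all _ fun t ht => by
      simpa [Real.norm_eq_abs] using hb t ht)

/-- `C / t^2` is integrable on `Ioi a` for `a > 0`. -/
private lemma intOn_div_sq {a : ℝ} (ha : 0 < a) (C : ℝ) :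
    IntegrableOn (fun t : ℝ => C / t^2) (Set.Ioi a) := by
  have h := integrableOn_Ioi_rpow_of_lt (by norm_num : (-2:ℝ) < -1) ha
  have h2 : IntegrableOn (fun t : ℝ => C * t ^ (-2:ℝ)) (Set.Ioi a) := h.const_mul C
  apply h2.congr_fun _ measurableSet_Ioi
  intro t ht
  have ht0 : (0:ℝ) < t := lt_trans ha ht
  have : t ^ (-2:ℝ) = (t^2)⁻¹ := by
    rw [show (-2:ℝ) = -((2:ℕ):ℝ) by norm_num, Real.rpow_neg ht0.le, Real.rpow_natCast]
  show C * t ^ (-2:ℝ) = C / t^2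
  rw [this, div_eq_mul_inv]

/-- Quotients by `t^2` of bounded measurable functions are integrable on `Ioi a`, `a > 0`. -/
private lemma intOn_bdd_div_sq {f : ℝ → ℝ} {a C : ℝ} (ha : 0 < a) (hm : Measurable f)
    (hb : ∀ t ∈ Set.Ioi a, |f t| ≤ C) :
    IntegrableOn (fun t : ℝ => f t / t^2) (Set.Ioi a) := by
  apply (intOn_div_sq ha C).mono' ((hm.div (measurable_id.pow_const 2)).aestronglyMeasurable)
  refine (ae_restrict_iff' measurableSet_Ioi).2 (ae_of_all _ fun t ht => ?_)
  have ht0 : (0:ℝ) < t := lt_trans ha ht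
  have h2 : (0:ℝ) < t^2 := by positivity
  simp only [id_eq, Pi.div_apply]
  rw [Real.norm_eq_abs, abs_div, abs_of_pos h2]
  gcongr
  exact hb t ht

set_option maxHeartbeats 4000000 in
/-- Dissipation estimate in the breakthrough scenario: if `u` obeys a concave
increasing modulus `ω` and `u(x) − u(y) = ω(ξ)` with `ξ = x − y > 0`, then
`Λu(x) − Λu(y)` is bounded below by the dissipation integrals, whose integrands
are nonnegative. -/
theorem breakthrough_dissipation (ω u : ℝ → ℝ) (x y ξ Lx Ly : ℝ)
    (hω0 : ω 0 = 0)
    (hconc : ConcaveOn ℝ (Set.Ici 0) ω)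
    (hmono : MonotoneOn ω (Set.Ici 0))
    (hu : ContDiff ℝ (⊤ : ℕ∞) u) (hper : Function.Periodic u (2*π))
    (hobey : ∀ a b : ℝ, |u a - u b| ≤ ω |a - b|)
    (hξ : ξ = x - y) (hξpos : 0 < ξ)
    (heq : u x - u y = ω ξ)
    (hLx : Filter.Tendsto (fun ε : ℝ =>
        (1/π) * ∫ w in {w : ℝ | ε ≤ |x - w|}, (u x - u w) / |x - w|^2)
        (𝓝[>] 0) (𝓝 Lx))
    (hLy : Filter.Tendsto (fun ε : ℝ =>
        (1/π) * ∫ w in {w : ℝ | ε ≤ |y - w|}, (u y - u w) / |y - w|^2)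
        (𝓝[>] 0) (𝓝 Ly)) :
    Lx - Ly ≥ (1/π) *
      ((∫ η in Set.Ioo 0 (ξ/2), (2*ω ξ - ω (ξ + 2*η) - ω (ξ - 2*η)) / η^2) +
       (∫ η in Set.Ioi (ξ/2), (2*ω ξ - ω (ξ + 2*η) + ω (2*η - ξ)) / η^2)) ∧
    (∀ η ∈ Set.Ioo 0 (ξ/2), 0 ≤ 2*ω ξ - ω (ξ + 2*η) - ω (ξ - 2*η)) ∧
    (∀ η ∈ Set.Ici (ξ/2), 0 ≤ 2*ω ξ - ω (ξ + 2*η) + ω (2*η - ξ)) := by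
  have hπ : (0:ℝ) < π := Real.pi_pos
  have hπ' : (0:ℝ) ≤ 1/π := by positivity
  have hξ0 : (0:ℝ) ≤ ξ := hξpos.le
  have hξ2 : (0:ℝ) < ξ/2 := by linarith
  have part2 : ∀ η ∈ Set.Ioo 0 (ξ/2), 0 ≤ 2*ω ξ - ω (ξ + 2*η) - ω (ξ - 2*η) := by
    intro η hη
    have h1 : (0:ℝ) ≤ ξ + 2*η := by nlinarith [hη.1]
    have h2 : (0:ℝ) ≤ ξ - 2*η := by nlinarith [hη.2]
    have h3 := mod_mid hconc h1 h2
    have harg : (ξ + 2*η + (ξ - 2*η))/2 = ξ := by ring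
    rw [harg] at h3
    linarith
  have part3 : ∀ η ∈ Set.Ici (ξ/2), 0 ≤ 2*ω ξ - ω (ξ + 2*η) + ω (2*η - ξ) := by
    intro η hη
    have hη' : ξ/2 ≤ η := hη
    have h1 : (0:ℝ) ≤ 2*η - ξ := by linarith
    have h2 := mod_subadd hω0 hconc (a := 2*ξ) (b := 2*η - ξ) (by linarith) h1
    have harg : 2*ξ + (2*η - ξ) = ξ + 2*η := by ring
    rw [harg] at h2
    have h3 := mod_double hω0 hconc hξ0
    linarith
  refine ⟨?_, part2, part3⟩
  -- ====================== setup ======================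
  have hucont : Continuous u := hu.continuous
  have humeas : Measurable u := hucont.measurable
  obtain ⟨M, hM⟩ : ∃ M : ℝ, ∀ t, |u t| ≤ M := by
    have h2π : (2*π) ≠ 0 := by positivity
    obtain ⟨C, hC⟩ := isBounded_iff_forall_norm_le.1 (hper.isBounded_of_continuous h2π hucont)
    exact ⟨C, fun t => by simpa [Real.norm_eq_abs] using hC (u t) (Set.mem_range_self t)⟩
  set ν : ℝ → ℝ := fun r => ω (max r 0) with hνdef
  have hνω : ∀ r : ℝ, 0 ≤ r → ν r = ω r := fun r hr => by simp [hνdef, max_eq_left hr]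
  have hνmono : Monotone ν := fun r r' h =>
    hmono (Set.mem_Ici.2 (le_max_right r 0)) (Set.mem_Ici.2 (le_max_right r' 0))
      (max_le_max h le_rfl)
  have hνmeas : Measurable ν := hνmono.measurable
  have hνnn : ∀ r : ℝ, 0 ≤ ν r := fun r => mod_nonneg hω0 hmono (le_max_right r 0)
  have hνobey : ∀ a b : ℝ, |u a - u b| ≤ ν |a - b| := fun a b => by
    rw [hνω _ (abs_nonneg _)]; exact hobey a b
  set c : ℝ := u x - u y with hcdef
  have hcν : c = ν ξ := by rw [heq, hνω ξ hξ0]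
  have hcnn : (0:ℝ) ≤ c := by rw [hcν]; exact hνnn ξ
  set m : ℝ := (x+y)/2 with hmdef
  have hmx : m + ξ/2 = x := by rw [hmdef, hξ]; ring
  have hmy : m - ξ/2 = y := by rw [hmdef, hξ]; ring
  -- the functions
  set q : ℝ → ℝ := fun s => ν (2*s) - (u (m+s) - u (m-s)) with hqdef
  set E : ℝ → ℝ := fun t => (2*c - (u (x+t) - u (y-t)) - (u (x-t) - u (y+t))) / t^2 with hEdef
  set P1 : ℝ → ℝ := fun t => (2*c - ν (ξ+2*t) - ν (ξ-2*t)) / t^2 with hP1def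
  set P2 : ℝ → ℝ := fun t => (2*c - ν (ξ+2*t) + ν (2*t-ξ)) / t^2 with hP2def
  set Km : ℝ → ℝ := fun s => q s / (s-ξ/2)^2 with hKmdef
  set Kp : ℝ → ℝ := fun s => q s / (s+ξ/2)^2 with hKpdef
  -- measurability
  have hma : ∀ a : ℝ, Measurable (fun t : ℝ => u (a + t)) :=
    fun a => humeas.comp (measurable_const.add measurable_id)
  have hms : ∀ a : ℝ, Measurable (fun t : ℝ => u (a - t)) :=
    fun a => humeas.comp (measurable_const.sub measurable_id)
  have hqmeas : Measurable q := by
    apply Measurable.sub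
    · exact hνmeas.comp (measurable_const.mul measurable_id)
    · exact (hma m).sub (hms m)
  have hEmeas : Measurable E := by
    apply Measurable.div _ (measurable_id.pow_const 2)
    exact (measurable_const.sub ((hma x).sub (hms y))).sub ((hms x).sub (hma y))
  have hP1meas : Measurable P1 := by
    apply Measurable.div _ (measurable_id.pow_const 2)
    exact (measurable_const.sub
        (hνmeas.comp (measurable_const.add (measurable_const.mul measurable_id)))).sub
      (hνmeas.comp (measurable_const.sub (measurable_const.mul measurable_id)))
  have hP2meas : Measurable P2 := by
    apply Measurable.div _ (measurable_id.pow_const 2)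
    exact (measurable_const.sub
        (hνmeas.comp (measurable_const.add (measurable_const.mul measurable_id)))).add
      (hνmeas.comp ((measurable_const.mul measurable_id).sub measurable_const))
  have hKmmeas : Measurable Km :=
    hqmeas.div ((measurable_id.sub measurable_const).pow_const 2)
  have hKpmeas : Measurable Kp :=
    hqmeas.div ((measurable_id.add measurable_const).pow_const 2)
  -- bounds on q
  have hqnn : ∀ s : ℝ, 0 ≤ s → 0 ≤ q s := by
    intro s hs
    have h := hνobey (m+s) (m-s)
    have e : m + s - (m - s) = 2*s := by ring
    rw [e, abs_of_nonneg (by linarith : (0:ℝ) ≤ 2*s)] at h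
    have h2 := (abs_le.1 h).2
    simp only [hqdef]
    linarith
  have hqub : ∀ s : ℝ, 0 ≤ s → |q s| ≤ 2 * ν (2*s) := by
    intro s hs
    have h := hνobey (m+s) (m-s)
    have e : m + s - (m - s) = 2*s := by ring
    rw [e, abs_of_nonneg (by linarith : (0:ℝ) ≤ 2*s)] at h
    have h1 := (abs_le.1 h).1
    have h2 := (abs_le.1 h).2
    have hn := hνnn (2*s)
    rw [abs_le]
    constructor
    · simp only [hqdef]; linarith
    · simp only [hqdef]; linarith
  -- pointwise identities
  have id1 : ∀ t : ℝ, E t = P1 t + (Km (t+ξ/2) + Km (ξ/2-t)) := by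
    intro t
    simp only [hEdef, hP1def, hKmdef, hqdef]
    rw [show t + ξ/2 - ξ/2 = t by ring, show ξ/2 - t - ξ/2 = -t by ring,
        show 2*(t+ξ/2) = ξ + 2*t by ring, show 2*(ξ/2-t) = ξ - 2*t by ring,
        show m + (t+ξ/2) = x + t by rw [← hmx]; ring,
        show m - (t+ξ/2) = y - t by rw [← hmy]; ring,
        show m + (ξ/2-t) = x - t by rw [← hmx]; ring,
        show m - (ξ/2-t) = y + t by rw [← hmy]; ring]
    ring
  have id2 : ∀ t : ℝ, E t = P2 t + Km (t+ξ/2) - Kp (t-ξ/2) := by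
    intro t
    simp only [hEdef, hP2def, hKmdef, hKpdef, hqdef]
    rw [show t + ξ/2 - ξ/2 = t by ring, show t - ξ/2 + ξ/2 = t by ring,
        show 2*(t+ξ/2) = ξ + 2*t by ring, show 2*(t-ξ/2) = 2*t - ξ by ring,
        show m + (t+ξ/2) = x + t by rw [← hmx]; ring,
        show m - (t+ξ/2) = y - t by rw [← hmy]; ring,
        show m + (t-ξ/2) = y + t by rw [← hmy]; ring,
        show m - (t-ξ/2) = x - t by rw [← hmx]; ring]
    ring
  -- ====================== substitution step ======================
  have hsubx : ∀ ε : ℝ,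
      (∫ w in {w : ℝ | ε ≤ |x - w|}, (u x - u w) / |x - w|^2)
        = ∫ t in {t : ℝ | ε ≤ |t|}, (u x - u (x - t)) / t^2 := by
    intro ε
    have hmp : MeasurePreserving (fun t : ℝ => x - t) volume volume :=
      Measure.measurePreserving_sub_left volume x
    have hemb : MeasurableEmbedding (fun t : ℝ => x - t) :=
      (MeasurableEquiv.subLeft x).measurableEmbedding
    have h := hmp.setIntegral_preimage_emb hemb
      (fun w => (u x - u w) / |x - w|^2) {w : ℝ | ε ≤ |x - w|}
    have hset : (fun t : ℝ => x - t) ⁻¹' {w : ℝ | ε ≤ |x - w|} = {t : ℝ | ε ≤ |t|} := by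
      ext t; simp [sub_sub_cancel]
    rw [hset] at h
    rw [← h]
    apply setIntegral_congr_fun (measurableSet_le measurable_const measurable_id.abs)
    intro t _
    simp only [sub_sub_cancel, sq_abs]
  have hsuby : ∀ ε : ℝ,
      (∫ w in {w : ℝ | ε ≤ |y - w|}, (u y - u w) / |y - w|^2)
        = ∫ t in {t : ℝ | ε ≤ |t|}, (u y - u (y + t)) / t^2 := by
    intro ε
    have hmp : MeasurePreserving (fun t : ℝ => y + t) volume volume :=
      measurePreserving_add_left volume y
    have hemb : MeasurableEmbedding (fun t : ℝ => y + t) :=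
      (MeasurableEquiv.addLeft y).measurableEmbedding
    have h := hmp.setIntegral_preimage_emb hemb
      (fun w => (u y - u w) / |y - w|^2) {w : ℝ | ε ≤ |y - w|}
    have hset : (fun t : ℝ => y + t) ⁻¹' {w : ℝ | ε ≤ |y - w|} = {t : ℝ | ε ≤ |t|} := by
      ext t; simp [sub_add_cancel_left]
    rw [hset] at h
    rw [← h]
    apply setIntegral_congr_fun (measurableSet_le measurable_const measurable_id.abs)
    intro t _
    simp only [sub_add_cancel_left, abs_neg, sq_abs, neg_sq]
  -- integrability over the truncated sets
  have hIoiInt : ∀ (f : ℝ → ℝ) (C : ℝ), Measurable f → (∀ t : ℝ, |f t| ≤ C) → ∀ ε : ℝ, 0 < ε →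
      IntegrableOn (fun t : ℝ => f t / t^2) (Set.Ioi ε) :=
    fun f C hf hb ε hε => intOn_bdd_div_sq hε hf (fun t _ => hb t)
  have hIciInt : ∀ (f : ℝ → ℝ) (C : ℝ), Measurable f → (∀ t : ℝ, |f t| ≤ C) → ∀ ε : ℝ, 0 < ε →
      IntegrableOn (fun t : ℝ => f t / t^2) (Set.Ici ε) := by
    intro f C hf hb ε hε
    rw [integrableOn_Ici_iff_integrableOn_Ioi]
    exact hIoiInt f C hf hb ε hε
  have hIicInt : ∀ (f : ℝ → ℝ) (C : ℝ), Measurable f → (∀ t : ℝ, |f t| ≤ C) → ∀ ε : ℝ, 0 < ε →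
      IntegrableOn (fun t : ℝ => f t / t^2) (Set.Iic (-ε)) := by
    intro f C hf hb ε hε
    have h2 : IntegrableOn (fun t : ℝ => f (-t) / t^2) (Set.Ici ε) :=
      hIciInt (fun t => f (-t)) C (hf.comp measurable_neg) (fun t => hb (-t)) ε hε
    have key := (Measure.measurePreserving_neg (volume : Measure ℝ)).integrableOn_comp_preimage
      (MeasurableEquiv.neg ℝ).measurableEmbedding
      (s := Set.Iic (-ε)) (f := fun t : ℝ => f t / t^2)
    refine key.mp ?_
    have hpre : (Neg.neg ⁻¹' Set.Iic (-ε) : Set ℝ) = Set.Ici ε := by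
      ext t
      simp only [Set.mem_preimage, Set.mem_Iic, Set.mem_Ici, neg_le_neg_iff]
    have h3 : ((fun t : ℝ => f t / t^2) ∘ Neg.neg) = fun t : ℝ => f (-t) / t^2 := by
      funext t; simp [Function.comp, neg_sq]
    rw [hpre, h3]
    exact h2
  have hsplitset : ∀ ε : ℝ, 0 < ε → {t : ℝ | ε ≤ |t|} = Set.Iic (-ε) ∪ Set.Ici ε := by
    intro ε hε; ext t
    simp only [Set.mem_setOf_eq, Set.mem_union, Set.mem_Iic, Set.mem_Ici, le_abs, le_neg]
    tauto
  have hUnionInt : ∀ (f : ℝ → ℝ) (C : ℝ), Measurable f → (∀ t : ℝ, |f t| ≤ C) → ∀ ε : ℝ, 0 < ε →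
      IntegrableOn (fun t : ℝ => f t / t^2) {t : ℝ | ε ≤ |t|} := by
    intro f C hf hb ε hε
    rw [hsplitset ε hε]
    exact (hIicInt f C hf hb ε hε).union (hIciInt f C hf hb ε hε)
  have hbnd2 : ∀ a b : ℝ, |u a - u b| ≤ 2*M := by
    intro a b
    have h1 := abs_le.1 (hM a); have h2 := abs_le.1 (hM b)
    rw [abs_le]; constructor <;> [linarith [h1.1, h2.2]; linarith [h1.2, h2.1]]
  -- ====================== step A ======================
  have stepA : ∀ ε : ℝ, 0 < ε →
      (∫ w in {w : ℝ | ε ≤ |x - w|}, (u x - u w) / |x - w|^2) -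
        (∫ w in {w : ℝ | ε ≤ |y - w|}, (u y - u w) / |y - w|^2) = ∫ t in Set.Ioi ε, E t := by
    intro ε hε
    rw [hsubx ε, hsuby ε]
    have hfx : IntegrableOn (fun t : ℝ => (u x - u (x - t)) / t^2) {t : ℝ | ε ≤ |t|} :=
      hUnionInt _ (2*M) (measurable_const.sub (hms x)) (fun t => hbnd2 x (x - t)) ε hε
    have hfy : IntegrableOn (fun t : ℝ => (u y - u (y + t)) / t^2) {t : ℝ | ε ≤ |t|} :=
      hUnionInt _ (2*M) (measurable_const.sub (hma y)) (fun t => hbnd2 y (y + t)) ε hε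
    rw [← integral_sub hfx hfy]
    have hΦ : (fun t : ℝ => (u x - u (x - t)) / t^2 - (u y - u (y + t)) / t^2)
        = fun t : ℝ => ((u x - u (x - t)) - (u y - u (y + t))) / t^2 := by
      funext t; ring
    rw [hΦ, hsplitset ε hε]
    have hΦm : Measurable (fun t : ℝ => ((u x - u (x - t)) - (u y - u (y + t))) / t^2) := by
      apply Measurable.div _ (measurable_id.pow_const 2)
      exact (measurable_const.sub (hms x)).sub (measurable_const.sub (hma y))
    have hΦb : ∀ t : ℝ, |(u x - u (x - t)) - (u y - u (y + t))| ≤ 2*(2*M) := by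
      intro t
      have h1 := hbnd2 x (x - t); have h2 := hbnd2 y (y + t)
      have h1' := abs_le.1 h1; have h2' := abs_le.1 h2
      rw [abs_le]; constructor <;> [linarith [h1'.1, h2'.2]; linarith [h1'.2, h2'.1]]
    have hΦint : IntegrableOn (fun t : ℝ => ((u x - u (x - t)) - (u y - u (y + t))) / t^2)
        {t : ℝ | ε ≤ |t|} :=
      hUnionInt _ (2*(2*M)) ((measurable_const.sub (hms x)).sub (measurable_const.sub (hma y)))
        hΦb ε hε
    rw [hsplitset ε hε] at hΦint
    rw [setIntegral_union (Set.Iic_disjoint_Ici.2 (by simp; linarith)) measurableSet_Ici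
      (hΦint.mono_set Set.subset_union_left) (hΦint.mono_set Set.subset_union_right)]
    have hrefl := (Measure.measurePreserving_neg (volume : Measure ℝ)).setIntegral_preimage_emb
      (MeasurableEquiv.neg ℝ).measurableEmbedding
      (fun t : ℝ => ((u x - u (x - t)) - (u y - u (y + t))) / t^2) (Set.Iic (-ε))
    have hpre : (Neg.neg ⁻¹' Set.Iic (-ε) : Set ℝ) = Set.Ici ε := by
      ext t
      simp only [Set.mem_preimage, Set.mem_Iic, Set.mem_Ici, neg_le_neg_iff]
    rw [hpre] at hrefl
    rw [← hrefl]
    have h1 : IntegrableOn (fun t : ℝ => ((u x - u (x - -t)) - (u y - u (y + -t))) / (-t)^2)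
        (Set.Ici ε) := by
      simp only [neg_sq, sub_neg_eq_add, ← sub_eq_add_neg]
      refine hIciInt _ (2*(2*M))
        ((measurable_const.sub (hma x)).sub (measurable_const.sub (hms y))) ?_ ε hε
      intro t
      have h1' := abs_le.1 (hbnd2 x (x + t)); have h2' := abs_le.1 (hbnd2 y (y - t))
      simp only [Pi.sub_apply]; rw [abs_le]; constructor <;> [linarith [h1'.1, h2'.2]; linarith [h1'.2, h2'.1]]
    have h2 : IntegrableOn (fun t : ℝ => ((u x - u (x - t)) - (u y - u (y + t))) / t^2)
        (Set.Ici ε) := hΦint.mono_set Set.subset_union_right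
    rw [← integral_add h1 h2, integral_Ici_eq_integral_Ioi]
    apply setIntegral_congr_fun measurableSet_Ioi
    intro t _
    simp only [neg_sq, sub_neg_eq_add, ← sub_eq_add_neg, hEdef, hcdef]
    ring
  -- ====================== step B ======================
  have hM0 : (0:ℝ) ≤ M := (abs_nonneg _).trans (hM 0)
  have hIooEq : ∀ (f : ℝ → ℝ) (a b : ℝ), a ≤ b →
      ∫ t in Set.Ioo a b, f t = ∫ t in a..b, f t := by
    intro f a b h
    rw [intervalIntegral.integral_of_le h, integral_Ioc_eq_integral_Ioo]
  have hqZ : ∀ Z s : ℝ, 0 ≤ s → s ≤ Z → |q s| ≤ 2 * ν (2*Z) := by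
    intro Z s h0 hZ
    exact (hqub s h0).trans (by have := hνmono (by linarith : 2*s ≤ 2*Z); linarith)
  have hnumE : ∀ t : ℝ, |2*c - (u (x+t) - u (y-t)) - (u (x-t) - u (y+t))| ≤ 8*M := by
    intro t
    rw [hcdef]
    have h1 := abs_le.1 (hM x); have h2 := abs_le.1 (hM y)
    have h3 := abs_le.1 (hM (x+t)); have h4 := abs_le.1 (hM (y-t))
    have h5 := abs_le.1 (hM (x-t)); have h6 := abs_le.1 (hM (y+t))
    rw [abs_le]
    constructor
    · linarith [h1.1, h2.2, h3.2, h4.1, h5.2, h6.1]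
    · linarith [h1.2, h2.1, h3.1, h4.2, h5.1, h6.2]
  have hKmB : ∀ a b δ C : ℝ, a ≤ b → (∀ s : ℝ, a < s → s ≤ b → δ ≤ |s - ξ/2|) → 0 < δ →
      (∀ s : ℝ, a < s → s ≤ b → |q s| ≤ C) → IntervalIntegrable Km volume a b := by
    intro a b δ C hab hδ hδ0 hC
    apply bddII hKmmeas (C := C / δ^2)
    intro t ht
    rw [Set.uIoc_of_le hab] at ht
    simp only [hKmdef]
    rw [abs_div, abs_of_nonneg (sq_nonneg (t - ξ/2))]
    have h1 : δ^2 ≤ (t - ξ/2)^2 := by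
      calc δ^2 ≤ |t - ξ/2|^2 := pow_le_pow_left₀ hδ0.le (hδ t ht.1 ht.2) 2
      _ = (t - ξ/2)^2 := sq_abs _
    exact div_le_div₀ (le_trans (abs_nonneg _) (hC t ht.1 ht.2)) (hC t ht.1 ht.2)
      (by positivity) h1
  have hKpB : ∀ a b C : ℝ, a ≤ b → 0 ≤ a → (∀ s : ℝ, a < s → s ≤ b → |q s| ≤ C) →
      IntervalIntegrable Kp volume a b := by
    intro a b C hab ha0 hC
    apply bddII hKpmeas (C := C / (ξ/2)^2)
    intro t ht
    rw [Set.uIoc_of_le hab] at ht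
    simp only [hKpdef]
    rw [abs_div, abs_of_nonneg (sq_nonneg (t + ξ/2))]
    have h1 : (ξ/2)^2 ≤ (t + ξ/2)^2 := by nlinarith [ht.1, ht.2]
    exact div_le_div₀ (le_trans (abs_nonneg _) (hC t ht.1 ht.2)) (hC t ht.1 ht.2)
      (by positivity) h1
  have stepB : ∀ ε : ℝ, ε ∈ Set.Ioo 0 (ξ/2) → ∀ R : ℝ, 2*ξ ≤ R →
      (∫ t in Set.Ioo ε (ξ/2), P1 t) + (∫ t in Set.Ioo (ξ/2) R, P2 t)
        - (16 * ν (2*ξ) / ξ^2) * ε ≤ ∫ t in Set.Ioo ε R, E t := by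
    intro ε hεm R hR
    obtain ⟨hε0, hεh⟩ := hεm
    have hεξ : ε ≤ ξ/2 := hεh.le
    have hξR : (ξ:ℝ) ≤ R - ξ/2 := by linarith
    have hRr : ξ/2 ≤ R := by linarith
    rw [hIooEq _ _ _ hεξ, hIooEq _ _ _ hRr, hIooEq _ _ _ (by linarith : ε ≤ R)]
    -- interval integrability
    have iE1 : IntervalIntegrable E volume ε (ξ/2) := by
      apply bddII hEmeas (C := 8*M/ε^2)
      intro t ht
      rw [Set.uIoc_of_le hεξ] at ht
      simp only [hEdef]
      rw [abs_div, abs_of_nonneg (sq_nonneg t)]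
      exact div_le_div₀ (by linarith [hM0]) (hnumE t) (by positivity)
        (pow_le_pow_left₀ hε0.le ht.1.le 2)
    have iE2 : IntervalIntegrable E volume (ξ/2) R := by
      apply bddII hEmeas (C := 8*M/(ξ/2)^2)
      intro t ht
      rw [Set.uIoc_of_le hRr] at ht
      simp only [hEdef]
      rw [abs_div, abs_of_nonneg (sq_nonneg t)]
      exact div_le_div₀ (by linarith [hM0]) (hnumE t) (by positivity)
        (pow_le_pow_left₀ hξ2.le ht.1.le 2)
    have iP1 : IntervalIntegrable P1 volume ε (ξ/2) := by
      apply bddII hP1meas (C := (4*M + 2*ν (2*ξ))/ε^2)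
      intro t ht
      rw [Set.uIoc_of_le hεξ] at ht
      simp only [hP1def]
      rw [abs_div, abs_of_nonneg (sq_nonneg t)]
      refine div_le_div₀ (by have := hνnn (2*ξ); linarith) ?_ (by positivity) (pow_le_pow_left₀ hε0.le ht.1.le 2)
      have hb1 : ν (ξ+2*t) ≤ ν (2*ξ) := hνmono (by linarith [ht.2])
      have hb2 : ν (ξ-2*t) ≤ ν (2*ξ) := hνmono (by linarith [ht.1])
      have hn1 := hνnn (ξ+2*t); have hn2 := hνnn (ξ-2*t)
      have hcabs := abs_le.1 (hbnd2 x y)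
      rw [hcdef, abs_le]
      constructor <;> [linarith [hcabs.1]; linarith [hcabs.2, hνnn (2*ξ)]]
    have iP2 : IntervalIntegrable P2 volume (ξ/2) R := by
      apply bddII hP2meas (C := (4*M + 2*ν (ξ+2*R))/(ξ/2)^2)
      intro t ht
      rw [Set.uIoc_of_le hRr] at ht
      simp only [hP2def]
      rw [abs_div, abs_of_nonneg (sq_nonneg t)]
      refine div_le_div₀ (by have := hνnn (ξ+2*R); linarith) ?_ (by positivity) (pow_le_pow_left₀ hξ2.le ht.1.le 2)
      have hb1 : ν (ξ+2*t) ≤ ν (ξ+2*R) := hνmono (by linarith [ht.2])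
      have hb2 : ν (2*t-ξ) ≤ ν (ξ+2*R) := hνmono (by linarith [ht.2])
      have hn1 := hνnn (ξ+2*t); have hn2 := hνnn (2*t-ξ)
      have hcabs := abs_le.1 (hbnd2 x y)
      rw [hcdef, abs_le]
      constructor <;> [linarith [hcabs.1, hνnn (ξ+2*R)]; linarith [hcabs.2]]
    have ig1a : IntervalIntegrable (fun t => Km (t+ξ/2)) volume ε (ξ/2) := by
      apply bddII (hKmmeas.comp (measurable_id.add_const (ξ/2))) (C := (2*ν (2*ξ))/ε^2)
      intro t ht
      rw [Set.uIoc_of_le hεξ] at ht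
      simp only [hKmdef, Function.comp, id_eq]
      rw [show t + ξ/2 - ξ/2 = t by ring, abs_div, abs_of_nonneg (sq_nonneg t)]
      exact div_le_div₀ (by have := hνnn (2*ξ); linarith) (hqZ ξ (t+ξ/2) (by linarith [ht.1]) (by linarith [ht.2]))
        (by positivity) (pow_le_pow_left₀ hε0.le ht.1.le 2)
    have ig2 : IntervalIntegrable (fun t => Km (ξ/2-t)) volume ε (ξ/2) := by
      apply bddII (hKmmeas.comp (measurable_const.sub measurable_id)) (C := (2*ν (2*ξ))/ε^2)
      intro t ht
      rw [Set.uIoc_of_le hεξ] at ht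
      simp only [hKmdef, Function.comp, id_eq, Pi.sub_apply]
      rw [show ξ/2 - t - ξ/2 = -t by ring, neg_sq, abs_div, abs_of_nonneg (sq_nonneg t)]
      exact div_le_div₀ (by have := hνnn (2*ξ); linarith) (hqZ ξ (ξ/2-t) (by linarith [ht.2]) (by linarith [ht.1]))
        (by positivity) (pow_le_pow_left₀ hε0.le ht.1.le 2)
    have ig1b : IntervalIntegrable (fun t => Km (t+ξ/2)) volume (ξ/2) R := by
      apply bddII (hKmmeas.comp (measurable_id.add_const (ξ/2))) (C := (2*ν (2*(R+ξ/2)))/(ξ/2)^2)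
      intro t ht
      rw [Set.uIoc_of_le hRr] at ht
      simp only [hKmdef, Function.comp, id_eq]
      rw [show t + ξ/2 - ξ/2 = t by ring, abs_div, abs_of_nonneg (sq_nonneg t)]
      exact div_le_div₀ (by have := hνnn (2*(R+ξ/2)); linarith) (hqZ (R+ξ/2) (t+ξ/2) (by linarith [ht.1]) (by linarith [ht.2]))
        (by positivity) (pow_le_pow_left₀ hξ2.le ht.1.le 2)
    have ig3 : IntervalIntegrable (fun t => Kp (t-ξ/2)) volume (ξ/2) R := by
      apply bddII (hKpmeas.comp (measurable_id.sub_const (ξ/2))) (C := (2*ν (2*(R-ξ/2)))/(ξ/2)^2)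
      intro t ht
      rw [Set.uIoc_of_le hRr] at ht
      simp only [hKpdef, Function.comp, id_eq]
      rw [show t - ξ/2 + ξ/2 = t by ring, abs_div, abs_of_nonneg (sq_nonneg t)]
      exact div_le_div₀ (by have := hνnn (2*(R-ξ/2)); linarith) (hqZ (R-ξ/2) (t-ξ/2) (by linarith [ht.1]) (by linarith [ht.2]))
        (by positivity) (pow_le_pow_left₀ hξ2.le ht.1.le 2)
    have iKm1 : IntervalIntegrable Km volume 0 (ξ/2-ε) := by
      refine hKmB 0 (ξ/2-ε) ε (2*ν (2*ξ)) (by linarith) ?_ hε0 ?_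
      · intro s h1 h2
        rw [abs_of_nonpos (by linarith : s - ξ/2 ≤ 0)]; linarith
      · intro s h1 h2; exact hqZ ξ s h1.le (by linarith)
    have iKm2 : IntervalIntegrable Km volume (ε+ξ/2) ξ := by
      refine hKmB (ε+ξ/2) ξ ε (2*ν (2*ξ)) (by linarith) ?_ hε0 ?_
      · intro s h1 h2
        rw [abs_of_nonneg (by linarith : (0:ℝ) ≤ s - ξ/2)]; linarith
      · intro s h1 h2; exact hqZ ξ s (by linarith) h2
    have iKm3b : IntervalIntegrable Km volume ξ (R-ξ/2) := by
      refine hKmB ξ (R-ξ/2) (ξ/2) (2*ν (2*(R-ξ/2))) (by linarith) ?_ hξ2 ?_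
      · intro s h1 h2
        rw [abs_of_nonneg (by linarith : (0:ℝ) ≤ s - ξ/2)]; linarith
      · intro s h1 h2; exact hqZ (R-ξ/2) s (by linarith) h2
    have iKm3c : IntervalIntegrable Km volume (R-ξ/2) (R+ξ/2) := by
      refine hKmB (R-ξ/2) (R+ξ/2) (ξ/2) (2*ν (2*(R+ξ/2))) (by linarith) ?_ hξ2 ?_
      · intro s h1 h2
        rw [abs_of_nonneg (by linarith : (0:ℝ) ≤ s - ξ/2)]; linarith
      · intro s h1 h2; exact hqZ (R+ξ/2) s (by linarith) h2
    have hKpC : ∀ a b : ℝ, a ≤ b → 0 ≤ a → b ≤ R-ξ/2 → IntervalIntegrable Kp volume a b := by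
      intro a b hab ha0 hbR
      exact hKpB a b (2*ν (2*(R-ξ/2))) hab ha0
        (fun s h1 h2 => hqZ (R-ξ/2) s (by linarith) (by linarith))
    have iKp1 : IntervalIntegrable Kp volume 0 (ξ/2-ε) := hKpC _ _ (by linarith) le_rfl (by linarith)
    have iKp2 : IntervalIntegrable Kp volume (ξ/2-ε) (ε+ξ/2) := hKpC _ _ (by linarith) (by linarith) (by linarith)
    have iKp3 : IntervalIntegrable Kp volume (ε+ξ/2) ξ := hKpC _ _ (by linarith) (by linarith) (by linarith)
    have iKp4 : IntervalIntegrable Kp volume ξ (R-ξ/2) := hKpC _ _ (by linarith) (by linarith) le_rfl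
    -- equalities
    have eq1 : (∫ t in ε..R, E t) = (∫ t in ε..ξ/2, E t) + ∫ t in (ξ/2)..R, E t :=
      (intervalIntegral.integral_add_adjacent_intervals iE1 iE2).symm
    have eq2 : (∫ t in ε..ξ/2, E t)
        = (∫ t in ε..ξ/2, P1 t) + ((∫ t in ε..ξ/2, Km (t+ξ/2)) + ∫ t in ε..ξ/2, Km (ξ/2-t)) := by
      rw [intervalIntegral.integral_congr (g := fun t => P1 t + (Km (t+ξ/2) + Km (ξ/2-t)))
        (fun t _ => id1 t)]
      rw [intervalIntegral.integral_add iP1 (ig1a.add ig2),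
        intervalIntegral.integral_add ig1a ig2]
    have eq3 : (∫ t in ε..ξ/2, Km (t+ξ/2)) = ∫ s in (ε+ξ/2)..ξ, Km s := by
      have h := intervalIntegral.integral_comp_add_right (a := ε) (b := ξ/2) Km (ξ/2)
      rw [show ξ/2 + ξ/2 = ξ by ring] at h
      exact h
    have eq4 : (∫ t in ε..ξ/2, Km (ξ/2-t)) = ∫ s in (0:ℝ)..(ξ/2-ε), Km s := by
      have h := intervalIntegral.integral_comp_sub_left (a := ε) (b := ξ/2) Km (ξ/2)
      rw [show ξ/2 - ξ/2 = (0:ℝ) by ring] at h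
      exact h
    have eq5 : (∫ t in (ξ/2)..R, E t)
        = (∫ t in (ξ/2)..R, P2 t) + (∫ t in (ξ/2)..R, Km (t+ξ/2)) - ∫ t in (ξ/2)..R, Kp (t-ξ/2) := by
      rw [intervalIntegral.integral_congr (g := fun t => P2 t + Km (t+ξ/2) - Kp (t-ξ/2))
        (fun t _ => id2 t)]
      rw [intervalIntegral.integral_sub (iP2.add ig1b) ig3,
        intervalIntegral.integral_add iP2 ig1b]
    have eq6 : (∫ t in (ξ/2)..R, Km (t+ξ/2)) = ∫ s in ξ..(R+ξ/2), Km s := by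
      have h := intervalIntegral.integral_comp_add_right (a := ξ/2) (b := R) Km (ξ/2)
      rw [show ξ/2 + ξ/2 = ξ by ring] at h
      exact h
    have eq7 : (∫ t in (ξ/2)..R, Kp (t-ξ/2)) = ∫ s in (0:ℝ)..(R-ξ/2), Kp s := by
      have h := intervalIntegral.integral_comp_sub_right (a := ξ/2) (b := R) Kp (ξ/2)
      rw [show ξ/2 - ξ/2 = (0:ℝ) by ring] at h
      exact h
    have eq8 : (∫ s in ξ..(R+ξ/2), Km s)
        = (∫ s in ξ..(R-ξ/2), Km s) + ∫ s in (R-ξ/2)..(R+ξ/2), Km s :=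
      (intervalIntegral.integral_add_adjacent_intervals iKm3b iKm3c).symm
    have eq9 : (∫ s in (0:ℝ)..(R-ξ/2), Kp s)
        = (((∫ s in (0:ℝ)..(ξ/2-ε), Kp s) + ∫ s in (ξ/2-ε)..(ε+ξ/2), Kp s)
          + ∫ s in (ε+ξ/2)..ξ, Kp s) + ∫ s in ξ..(R-ξ/2), Kp s := by
      rw [intervalIntegral.integral_add_adjacent_intervals iKp1 iKp2,
        intervalIntegral.integral_add_adjacent_intervals (iKp1.trans iKp2) iKp3,
        intervalIntegral.integral_add_adjacent_intervals ((iKp1.trans iKp2).trans iKp3) iKp4]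
    -- inequalities
    have hKpKm : ∀ s : ℝ, 0 ≤ s → s ≠ ξ/2 → Kp s ≤ Km s := by
      intro s h0 hne
      simp only [hKpdef, hKmdef]
      have hd1 : (0:ℝ) < (s - ξ/2)^2 := by
        have : s - ξ/2 ≠ 0 := fun h => hne (by linarith)
        positivity
      have hd2 : (s - ξ/2)^2 ≤ (s + ξ/2)^2 := by nlinarith
      rw [div_le_div_iff₀ (by positivity) hd1]
      exact mul_le_mul_of_nonneg_left hd2 (hqnn s h0)
    have le1 : (∫ s in (0:ℝ)..(ξ/2-ε), Kp s) ≤ ∫ s in (0:ℝ)..(ξ/2-ε), Km s := by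
      apply intervalIntegral.integral_mono_on (by linarith) iKp1 iKm1
      intro s hs
      exact hKpKm s hs.1 (by intro h; rw [h] at hs; linarith [hs.2])
    have le2 : (∫ s in (ε+ξ/2)..ξ, Kp s) ≤ ∫ s in (ε+ξ/2)..ξ, Km s := by
      apply intervalIntegral.integral_mono_on (by linarith) iKp3 iKm2
      intro s hs
      exact hKpKm s (by linarith [hs.1]) (by intro h; rw [h] at hs; linarith [hs.1])
    have le3 : (∫ s in ξ..(R-ξ/2), Kp s) ≤ ∫ s in ξ..(R-ξ/2), Km s := by
      apply intervalIntegral.integral_mono_on (by linarith) iKp4 iKm3b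
      intro s hs
      exact hKpKm s (by linarith [hs.1]) (by intro h; rw [h] at hs; linarith [hs.1])
    have le4 : (0:ℝ) ≤ ∫ s in (R-ξ/2)..(R+ξ/2), Km s := by
      apply intervalIntegral.integral_nonneg (by linarith)
      intro s hs
      simp only [hKmdef]
      exact div_nonneg (hqnn s (by linarith [hs.1])) (by positivity)
    have le5 : (∫ s in (ξ/2-ε)..(ε+ξ/2), Kp s) ≤ (16 * ν (2*ξ) / ξ^2) * ε := by
      have hptw : ∀ s ∈ Set.Icc (ξ/2-ε) (ε+ξ/2), Kp s ≤ 8 * ν (2*ξ) / ξ^2 := by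
        intro s hs
        simp only [hKpdef]
        have h1 : q s ≤ 2*ν (2*ξ) :=
          (le_abs_self _).trans (hqZ ξ s (by linarith [hs.1]) (by linarith [hs.2]))
        have h2 : (ξ/2)^2 ≤ (s + ξ/2)^2 :=
          pow_le_pow_left₀ (by positivity) (by linarith [hs.1]) 2
        calc q s / (s+ξ/2)^2 ≤ (2*ν (2*ξ)) / (ξ/2)^2 :=
              div_le_div₀ (by have := hνnn (2*ξ); linarith) h1 (by positivity) h2
        _ = 8 * ν (2*ξ) / ξ^2 := by rw [div_eq_div_iff (by positivity) (by positivity)]; ring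
      have h := intervalIntegral.integral_mono_on (by linarith : ξ/2-ε ≤ ε+ξ/2) iKp2
        intervalIntegrable_const hptw
      rw [intervalIntegral.integral_const, smul_eq_mul] at h
      calc (∫ s in (ξ/2-ε)..(ε+ξ/2), Kp s) ≤ (ε+ξ/2 - (ξ/2-ε)) * (8 * ν (2*ξ) / ξ^2) := h
      _ = (16 * ν (2*ξ) / ξ^2) * ε := by ring
    linarith [eq1, eq2, eq3, eq4, eq5, eq6, eq7, eq8, eq9, le1, le2, le3, le4, le5]

  -- ====================== limits ======================
  have hEint : ∀ ε : ℝ, 0 < ε → IntegrableOn E (Set.Ioi ε) := by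
    intro ε hε
    rw [hEdef]
    exact intOn_bdd_div_sq hε
      ((measurable_const.sub ((hma x).sub (hms y))).sub ((hms x).sub (hma y)))
      (fun t _ => hnumE t)
  have hP2num : ∀ t : ℝ, ξ/2 ≤ t →
      0 ≤ 2*c - ν (ξ+2*t) + ν (2*t-ξ) ∧ 2*c - ν (ξ+2*t) + ν (2*t-ξ) ≤ 2*c := by
    intro t ht
    constructor
    · have h3 := part3 t (Set.mem_Ici.2 ht)
      have e1 : ν (ξ+2*t) = ω (ξ+2*t) := hνω _ (by linarith)
      have e2 : ν (2*t-ξ) = ω (2*t-ξ) := hνω _ (by linarith)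
      rw [heq, e1, e2]
      linarith
    · have := hνmono (show 2*t-ξ ≤ ξ+2*t by linarith)
      linarith
  have hP2int : IntegrableOn P2 (Set.Ioi (ξ/2)) := by
    rw [hP2def]
    apply intOn_bdd_div_sq hξ2 (C := 2*c)
      ((measurable_const.sub
        (hνmeas.comp (measurable_const.add (measurable_const.mul measurable_id)))).add
        (hνmeas.comp ((measurable_const.mul measurable_id).sub measurable_const)))
    intro t ht
    have h := hP2num t (le_of_lt ht)
    simp only [Function.comp, id_eq, Pi.add_apply, Pi.sub_apply, Pi.mul_apply]
    rw [abs_of_nonneg h.1]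
    exact h.2
  have hlimE : ∀ ε : ℝ, 0 < ε → Tendsto (fun n : ℕ => ∫ t in Set.Ioo ε (n:ℝ), E t) atTop
      (𝓝 (∫ t in Set.Ioi ε, E t)) := by
    intro ε hε
    have hU : (⋃ n : ℕ, Set.Ioo ε (n:ℝ)) = Set.Ioi ε := by
      ext t
      simp only [Set.mem_iUnion, Set.mem_Ioo, Set.mem_Ioi]
      constructor
      · rintro ⟨n, h1, _⟩; exact h1
      · intro h
        obtain ⟨n, hn⟩ := exists_nat_gt t
        exact ⟨n, h, hn⟩
    have h := tendsto_setIntegral_of_monotone (μ := volume) (f := E)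
      (s := fun n : ℕ => Set.Ioo ε (n:ℝ)) (fun n => measurableSet_Ioo)
      (fun n k hnk => Set.Ioo_subset_Ioo le_rfl (by exact_mod_cast hnk))
      (by rw [hU]; exact hEint ε hε)
    rwa [hU] at h
  have hlimP2 : Tendsto (fun n : ℕ => ∫ t in Set.Ioo (ξ/2) (n:ℝ), P2 t) atTop
      (𝓝 (∫ t in Set.Ioi (ξ/2), P2 t)) := by
    have hU : (⋃ n : ℕ, Set.Ioo (ξ/2) (n:ℝ)) = Set.Ioi (ξ/2) := by
      ext t
      simp only [Set.mem_iUnion, Set.mem_Ioo, Set.mem_Ioi]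
      constructor
      · rintro ⟨n, h1, _⟩; exact h1
      · intro h
        obtain ⟨n, hn⟩ := exists_nat_gt t
        exact ⟨n, h, hn⟩
    have h := tendsto_setIntegral_of_monotone (μ := volume) (f := P2)
      (s := fun n : ℕ => Set.Ioo (ξ/2) (n:ℝ)) (fun n => measurableSet_Ioo)
      (fun n k hnk => Set.Ioo_subset_Ioo le_rfl (by exact_mod_cast hnk))
      (by rw [hU]; exact hP2int)
    rwa [hU] at h
  have stepB' : ∀ ε : ℝ, ε ∈ Set.Ioo 0 (ξ/2) →
      (∫ t in Set.Ioo ε (ξ/2), P1 t) + (∫ t in Set.Ioi (ξ/2), P2 t)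
        - (16 * ν (2*ξ) / ξ^2) * ε ≤ ∫ t in Set.Ioi ε, E t := by
    intro ε hεm
    have hev : ∀ᶠ n : ℕ in atTop,
        (∫ t in Set.Ioo ε (ξ/2), P1 t) + (∫ t in Set.Ioo (ξ/2) (n:ℝ), P2 t)
          - (16 * ν (2*ξ) / ξ^2) * ε ≤ ∫ t in Set.Ioo ε (n:ℝ), E t := by
      filter_upwards [eventually_ge_atTop (⌈2*ξ⌉₊)] with n hn
      apply stepB ε hεm
      calc (2*ξ) ≤ (⌈2*ξ⌉₊ : ℝ) := Nat.le_ceil _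
      _ ≤ (n:ℝ) := by exact_mod_cast hn
    exact le_of_tendsto_of_tendsto
      ((tendsto_const_nhds.add hlimP2).sub tendsto_const_nhds) (hlimE ε hεm.1) hev
  have hmain : Tendsto (fun ε : ℝ => (1/π) * ∫ t in Set.Ioi ε, E t) (𝓝[>] 0)
      (𝓝 (Lx - Ly)) := by
    have h0 := hLx.sub hLy
    apply h0.congr'
    filter_upwards [self_mem_nhdsWithin] with ε hε
    rw [← mul_sub, stepA ε hε]
  have hP1nn : ∀ t ∈ Set.Ioo (0:ℝ) (ξ/2), 0 ≤ P1 t := by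
    intro t ht
    have h2 := part2 t ht
    have e1 : ν (ξ+2*t) = ω (ξ+2*t) := hνω _ (by linarith [ht.1])
    have e2 : ν (ξ-2*t) = ω (ξ-2*t) := hνω _ (by linarith [ht.2])
    simp only [hP1def]
    apply div_nonneg _ (sq_nonneg t)
    rw [heq, e1, e2]
    linarith
  have hP1int : ∀ ε : ℝ, 0 < ε → IntegrableOn P1 (Set.Ioo ε (ξ/2)) := by
    intro ε hε
    apply Measure.integrableOn_of_bounded (M := (4*M + 2*ν (2*ξ))/ε^2)
      measure_Ioo_lt_top.ne hP1meas.aestronglyMeasurable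
    refine (ae_restrict_iff' measurableSet_Ioo).2 (ae_of_all _ fun t ht => ?_)
    rw [Real.norm_eq_abs]
    simp only [hP1def]
    rw [abs_div, abs_of_nonneg (sq_nonneg t)]
    refine div_le_div₀ (by have := hνnn (2*ξ); linarith) ?_ (by positivity)
      (pow_le_pow_left₀ hε.le ht.1.le 2)
    have hb1 : ν (ξ+2*t) ≤ ν (2*ξ) := hνmono (by linarith [ht.2])
    have hb2 : ν (ξ-2*t) ≤ ν (2*ξ) := hνmono (by linarith [ht.1])
    have hn1 := hνnn (ξ+2*t); have hn2 := hνnn (ξ-2*t)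
    have hcabs := abs_le.1 (hbnd2 x y)
    rw [hcdef, abs_le]
    constructor <;> [linarith [hcabs.1]; linarith [hcabs.2, hνnn (2*ξ)]]
  have star : ∀ ε₀ : ℝ, ε₀ ∈ Set.Ioo 0 (ξ/2) →
      (1/π) * ((∫ t in Set.Ioo ε₀ (ξ/2), P1 t) + ∫ t in Set.Ioi (ξ/2), P2 t) ≤ Lx - Ly := by
    intro ε₀ hε₀
    set A0 : ℝ := (∫ t in Set.Ioo ε₀ (ξ/2), P1 t) + ∫ t in Set.Ioi (ξ/2), P2 t with hA0
    have hf : Tendsto (fun ε : ℝ => (1/π) * (A0 - (16 * ν (2*ξ) / ξ^2) * ε)) (𝓝[>] 0)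
        (𝓝 ((1/π) * A0)) := by
      have hc : Continuous (fun ε : ℝ => (1/π) * (A0 - (16 * ν (2*ξ) / ξ^2) * ε)) :=
        continuous_const.mul (continuous_const.sub (continuous_const.mul continuous_id))
      have h := hc.tendsto 0
      simp only [mul_zero, sub_zero] at h
      exact h.mono_left nhdsWithin_le_nhds
    have hev : ∀ᶠ ε in 𝓝[>] (0:ℝ),
        (1/π) * (A0 - (16 * ν (2*ξ) / ξ^2) * ε) ≤ (1/π) * ∫ t in Set.Ioi ε, E t := by
      filter_upwards [Ioo_mem_nhdsGT_of_mem ⟨le_rfl, hε₀.1⟩] with ε hε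
      have hεm : ε ∈ Set.Ioo 0 (ξ/2) := ⟨hε.1, lt_trans hε.2 hε₀.2⟩
      have h1 := stepB' ε hεm
      have hmono' : (∫ t in Set.Ioo ε₀ (ξ/2), P1 t) ≤ ∫ t in Set.Ioo ε (ξ/2), P1 t := by
        apply setIntegral_mono_set (hP1int ε hε.1)
        · exact (ae_restrict_iff' measurableSet_Ioo).2 (ae_of_all _ fun t ht =>
            hP1nn t ⟨lt_trans hε.1 ht.1, ht.2⟩)
        · exact (Set.Ioo_subset_Ioo_left hε.2.le).eventuallyLE
      apply mul_le_mul_of_nonneg_left _ hπ'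
      rw [hA0]
      linarith
    exact le_of_tendsto_of_tendsto hf hmain hev
  -- ====================== conclusion ======================
  have hcong1 : (∫ η in Set.Ioo 0 (ξ/2), (2*ω ξ - ω (ξ + 2*η) - ω (ξ - 2*η)) / η^2)
      = ∫ t in Set.Ioo 0 (ξ/2), P1 t := by
    apply setIntegral_congr_fun measurableSet_Ioo
    intro t ht
    simp only [hP1def]
    rw [heq, hνω _ (by linarith [ht.1] : (0:ℝ) ≤ ξ+2*t),
      hνω _ (by linarith [ht.2] : (0:ℝ) ≤ ξ-2*t)]
  have hcong2 : (∫ η in Set.Ioi (ξ/2), (2*ω ξ - ω (ξ + 2*η) + ω (2*η - ξ)) / η^2)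
      = ∫ t in Set.Ioi (ξ/2), P2 t := by
    apply setIntegral_congr_fun measurableSet_Ioi
    intro t ht
    have ht' : ξ/2 < t := ht
    simp only [hP2def]
    rw [heq, hνω _ (by linarith : (0:ℝ) ≤ ξ+2*t), hνω _ (by linarith : (0:ℝ) ≤ 2*t-ξ)]
  rw [ge_iff_le, hcong1, hcong2]
  by_cases hint : IntegrableOn P1 (Set.Ioo 0 (ξ/2))
  · have hεn : ∀ n : ℕ, ξ/(2*(n:ℝ)+4) ∈ Set.Ioo 0 (ξ/2) := by
      intro n
      have hn0 : (0:ℝ) ≤ (n:ℝ) := Nat.cast_nonneg n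
      constructor
      · positivity
      · rw [div_lt_div_iff₀ (by positivity) (by norm_num : (0:ℝ) < 2)]
        nlinarith
    have hmonoN : Monotone (fun n : ℕ => Set.Ioo (ξ/(2*(n:ℝ)+4)) (ξ/2)) := by
      intro a b hab
      apply Set.Ioo_subset_Ioo_left
      have hc' : (2*(a:ℝ)+4) ≤ 2*(b:ℝ)+4 := by
        have := (Nat.cast_le (α := ℝ)).2 hab; linarith
      have ha' : (0:ℝ) < 2*(a:ℝ)+4 := by positivity
      exact div_le_div_of_nonneg_left hξ0 ha' hc'
    have hUn : (⋃ n : ℕ, Set.Ioo (ξ/(2*(n:ℝ)+4)) (ξ/2)) = Set.Ioo 0 (ξ/2) := by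
      ext t
      simp only [Set.mem_iUnion, Set.mem_Ioo]
      constructor
      · rintro ⟨n, h1, h2⟩; exact ⟨lt_trans (hεn n).1 h1, h2⟩
      · rintro ⟨h1, h2⟩
        obtain ⟨n, hn⟩ := exists_nat_gt (ξ/t)
        refine ⟨n, ?_, h2⟩
        rw [div_lt_iff₀ (by positivity)]
        rw [div_lt_iff₀ h1] at hn
        nlinarith
    have hlim := tendsto_setIntegral_of_monotone (μ := volume) (f := P1)
      (fun n : ℕ => measurableSet_Ioo) hmonoN (by rw [hUn]; exact hint)
    rw [hUn] at hlim
    have hseq : ∀ n : ℕ, (1/π) * ((∫ t in Set.Ioo (ξ/(2*(n:ℝ)+4)) (ξ/2), P1 t)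
        + ∫ t in Set.Ioi (ξ/2), P2 t) ≤ Lx - Ly := fun n => star _ (hεn n)
    have hlim2 : Tendsto (fun n : ℕ => (1/π) * ((∫ t in Set.Ioo (ξ/(2*(n:ℝ)+4)) (ξ/2), P1 t)
        + ∫ t in Set.Ioi (ξ/2), P2 t)) atTop
        (𝓝 ((1/π) * ((∫ t in Set.Ioo 0 (ξ/2), P1 t) + ∫ t in Set.Ioi (ξ/2), P2 t))) :=
      (hlim.add tendsto_const_nhds).const_mul _
    exact le_of_tendsto hlim2 (Filter.Eventually.of_forall hseq)
  · rw [integral_undef hint]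
    have h := star (ξ/4) ⟨by positivity, by linarith⟩
    have hnn : 0 ≤ ∫ t in Set.Ioo (ξ/4) (ξ/2), P1 t :=
      setIntegral_nonneg measurableSet_Ioo
        (fun t ht => hP1nn t ⟨by linarith [ht.1], ht.2⟩)
    have h2 : (1/π) * ((0:ℝ) + ∫ t in Set.Ioi (ξ/2), P2 t)
        ≤ (1/π) * ((∫ t in Set.Ioo (ξ/4) (ξ/2), P1 t) + ∫ t in Set.Ioi (ξ/2), P2 t) := by
      apply mul_le_mul_of_nonneg_left _ hπ'
      linarith
    linarith
end

section
/- Let ω(ξ) = ξ − ξ^{3/2} on (0, δ] and ω(ξ) = δ − δ^{3/2} + γ·log(1 + (1/4)log(ξ/δ)) on (δ, ∞) with 0 < γ ≤ δ sufficiently small. Then for all ξ ≥ δ, ω(2ξ) ≤ (3/2)·ω(ξ). -/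
open Real Set

/-- Doubling property of the modulus: for `ω` defined piecewise as
`ω(ξ) = ξ − ξ^{3/2}` on `(0, δ]` and
`ω(ξ) = δ − δ^{3/2} + γ·log(1 + (1/4)log(ξ/δ))` on `(δ, ∞)`, with
`0 < γ ≤ δ ≤ 1/4`, one has `ω(2ξ) ≤ (3/2)·ω(ξ)` for all `ξ ≥ δ`. -/
theorem modulus_doubling (δ γ : ℝ) (hγ : 0 < γ) (hγδ : γ ≤ δ) (hδ : δ ≤ 1/4) :
    let ω : ℝ → ℝ := fun ξ =>
      if ξ ≤ δ then ξ - ξ ^ ((3:ℝ)/2)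
      else δ - δ ^ ((3:ℝ)/2) + γ * Real.log (1 + (1/4) * Real.log (ξ/δ))
    ∀ ξ : ℝ, δ ≤ ξ → ω (2*ξ) ≤ (3/2) * ω ξ := by
  intro ω ξ hξ
  have hδ0 : (0:ℝ) < δ := lt_of_lt_of_le hγ hγδ
  have hξ0 : (0:ℝ) < ξ := lt_of_lt_of_le hδ0 hξ
  have h2ξ : ¬ (2*ξ ≤ δ) := by nlinarith
  -- δ^{3/2} ≤ δ/2
  have hsqrt : Real.sqrt δ ≤ 1/2 := by
    have h1 : Real.sqrt δ ≤ Real.sqrt (1/4) := Real.sqrt_le_sqrt hδ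
    have h2 : Real.sqrt (1/4 : ℝ) = 1/2 := by
      rw [show (1/4:ℝ) = (1/2)^2 by norm_num, Real.sqrt_sq (by norm_num)]
    linarith
  have h32 : δ ^ ((3:ℝ)/2) ≤ δ/2 := by
    have h2 : δ ^ ((1:ℝ)/2) = Real.sqrt δ := (Real.sqrt_eq_rpow δ).symm
    have h1 : δ ^ ((3:ℝ)/2) = δ * Real.sqrt δ := by
      rw [show (3:ℝ)/2 = 1 + 1/2 by norm_num, Real.rpow_add hδ0, Real.rpow_one, h2]
    rw [h1]
    nlinarith [Real.sqrt_nonneg δ]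
  set c : ℝ := Real.log 2 / 4 with hc
  have hlog2pos : (0:ℝ) < Real.log 2 := Real.log_pos (by norm_num)
  have hlog2le : Real.log 2 ≤ 1 := by
    have := Real.log_le_sub_one_of_pos (show (0:ℝ) < 2 by norm_num)
    linarith
  have hcpos : 0 < c := by positivity
  -- key: γ * log(1+c) ≤ (1/2) * (δ - δ^{3/2})
  have hkey : γ * Real.log (1 + c) ≤ (1/2) * (δ - δ ^ ((3:ℝ)/2)) := by
    have h1 : Real.log (1 + c) ≤ c := by
      have := Real.log_le_sub_one_of_pos (show (0:ℝ) < 1 + c by linarith)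
      linarith
    have h2 : Real.log (1 + c) ≤ 1/4 := by
      rw [hc] at h1; linarith
    have h3 : γ * Real.log (1 + c) ≤ δ * (1/4) := by
      have hln : 0 ≤ Real.log (1 + c) := Real.log_nonneg (by linarith)
      nlinarith
    nlinarith
  -- rewrite log(2ξ/δ)
  have hlogsplit : Real.log (2*ξ/δ) = Real.log 2 + Real.log (ξ/δ) := by
    rw [mul_div_assoc, Real.log_mul (by norm_num) (ne_of_gt (div_pos hξ0 hδ0))]
  simp only [ω, if_neg h2ξ]
  by_cases hle : ξ ≤ δ
  · have hξδ : ξ = δ := le_antisymm hle hξ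
    subst hξδ
    rw [if_pos hle, hlogsplit, div_self (ne_of_gt hδ0), Real.log_one]
    have : 1 + 1/4 * (Real.log 2 + 0) = 1 + c := by rw [hc]; ring
    rw [this]
    linarith
  · rw [if_neg hle]
    have htξ : 0 ≤ Real.log (ξ/δ) := Real.log_nonneg ((one_le_div hδ0).mpr hξ)
    set t : ℝ := (1/4) * Real.log (ξ/δ) with ht
    have ht0 : 0 ≤ t := by positivity
    have hlt : Real.log (1 + t) ≥ 0 := Real.log_nonneg (by linarith)
    have hsum : Real.log (1 + (1/4) * Real.log (2*ξ/δ)) ≤ Real.log (1 + c) + Real.log (1 + t) := by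
      have h1 : 1 + (1/4) * Real.log (2*ξ/δ) = 1 + c + t := by
        rw [hlogsplit, hc, ht]; ring
      rw [h1, ← Real.log_mul (by linarith) (by linarith)]
      apply Real.log_le_log (by linarith)
      nlinarith
    have := mul_le_mul_of_nonneg_left hsum (le_of_lt hγ)
    nlinarith
end
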